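/- arXiv:2510.07237 — 6 statements merged into one kernel-verified Lean document; each statement's English description precedes it below -/
import Mathlib

section
/- Let c be a recurrence vector with c_k = 1 and let (X_n)_{n∈Z} be the c-recurrence vector sequence in Z^{k-1}. Define, for n ≥ k-2, the map S_n : Z^{k-1} → Z/(X_n) by S_n(v) = v · (X_{n-1}^s, ..., X_{n-k+1}^s) mod X_n^s, where (X_n^s) is the scalar PLRS with the same recurrence coefficients. Then for all 1 ≤ i ≤ n-1, S_n(X_{-i}) = X_{n-i}^s mod X_n^s. -/
/-!
Both `i ↦ S_n(X_{-i})` and `i ↦ X^s_{n-i}` satisfy the recurrence read backwards,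
`u i = ∑_{l=1}^k c_l u (i + l)` (the first for all `i`, by linearity of `S_n`; the second as
long as `n - i > k`). Since `c_k = 1`, such a sequence is determined by its first `k` terms, and
there the two agree modulo `X^s_n`: `S_n(X_0) = 0 ≡ X^s_n`, and `S_n(e_i) = X^s_{n-i}`.
-/

/-- The scalar product `S_n(v) = v · (X^s_{n-1}, …, X^s_{n-k+1}) (mod X^s_n)`. -/
def Sdot (k n : ℕ) (Xs : ℕ → ℤ) (v : Fin (k - 1) → ℤ) : ℤ :=
  ∑ j : Fin (k - 1), v j * Xs (n - 1 - (j : ℕ))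

open Finset

lemma add_eq_sub_sum_of_eq_sum {k : ℕ} (hk : 1 ≤ k) {c u : ℕ → ℤ} (hck : c k = 1) {j : ℕ}
    (h : u j = ∑ l ∈ Icc 1 k, c l * u (j + l)) :
    u (j + k) = u j - ∑ l ∈ Icc 1 (k - 1), c l * u (j + l) := by
  have hIcc : Icc 1 k = insert k (Icc 1 (k - 1)) := by
    ext x; simp only [mem_Icc, mem_insert]; omega
  rw [hIcc, sum_insert (by simp; omega), hck, one_mul] at h
  linarith

theorem Int.ModEq.of_eq_sum_of_modEq_of_lt {N : ℤ} {k L : ℕ} (hk : 1 ≤ k) {c a b : ℕ → ℤ}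
    (hck : c k = 1)
    (ha : ∀ j, j + k ≤ L → a j = ∑ l ∈ Icc 1 k, c l * a (j + l))
    (hb : ∀ j, j + k ≤ L → b j = ∑ l ∈ Icc 1 k, c l * b (j + l))
    (hinit : ∀ i < k, a i ≡ b i [ZMOD N]) :
    ∀ i ≤ L, a i ≡ b i [ZMOD N] := by
  intro i
  induction i using Nat.strong_induction_on with
  | _ i ih =>
    intro hiL
    rcases lt_or_ge i k with hik | hki
    · exact hinit i hik
    obtain ⟨j, rfl⟩ : ∃ j, i = j + k := ⟨i - k, by omega⟩
    rw [add_eq_sub_sum_of_eq_sum hk hck (ha j hiL), add_eq_sub_sum_of_eq_sum hk hck (hb j hiL)]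
    refine (ih j (by omega) (by omega)).sub (Int.ModEq.sum fun l hl => ?_)
    have hl : l ≤ k - 1 := (mem_Icc.1 hl).2
    exact (ih (j + l) (by omega) (by omega)).mul_left _

lemma Sdot_sum_smul {k n : ℕ} {Xs : ℕ → ℤ} {ι : Type*} (s : Finset ι) (c : ι → ℤ)
    (v : ι → Fin (k - 1) → ℤ) :
    Sdot k n Xs (∑ l ∈ s, c l • v l) = ∑ l ∈ s, c l * Sdot k n Xs (v l) := by
  simp only [Sdot, Finset.sum_apply, Pi.smul_apply, smul_eq_mul, sum_mul, mul_sum, mul_assoc]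
  exact sum_comm

lemma Sdot_single {k n i : ℕ} {Xs : ℕ → ℤ} (hi1 : 1 ≤ i) (hik : i ≤ k - 1) :
    Sdot k n Xs (fun j : Fin (k - 1) => if (j : ℕ) + 1 = i then 1 else 0) = Xs (n - i) := by
  rw [Sdot, Fintype.sum_eq_single ⟨i - 1, by omega⟩]
  · simp only [show i - 1 + 1 = i by omega, if_true, one_mul]
    congr 1
    omega
  · intro j hj
    rw [if_neg, zero_mul]
    exact fun h => hj (Fin.ext (by simp only; omega))

theorem Sn_on_basis_general
    (k : ℕ) (hk : 2 ≤ k) (c : ℕ → ℤ)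
    (hck : c k = 1)
    (Xs : ℕ → ℤ)
    (hXsrec : ∀ n, k < n → Xs n = ∑ i ∈ Finset.Icc 1 k, c i * Xs (n - i))
    (V : ℤ → Fin (k - 1) → ℤ)
    (hV0 : V 0 = 0)
    (hVe : ∀ i : ℕ, 1 ≤ i → i ≤ k - 1 →
      V (-(i : ℤ)) = fun j : Fin (k - 1) => if (j : ℕ) + 1 = i then 1 else 0)
    (hVrec : ∀ n : ℤ, V n = ∑ l ∈ Finset.Icc 1 k, c l • V (n - (l : ℤ)))
    (n : ℕ) :
    ∀ i : ℕ, 1 ≤ i → i ≤ n - 1 →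
      Int.ModEq (Xs n) (Sdot k n Xs (V (-(i : ℤ)))) (Xs (n - i)) := by
  intro i _ hi
  refine Int.ModEq.of_eq_sum_of_modEq_of_lt (a := fun i => Sdot k n Xs (V (-(i : ℤ))))
    (b := fun i => Xs (n - i)) (by omega) hck (fun j _ => ?_) (fun j hj => ?_) (fun i hik => ?_) i hi
  · rw [hVrec, Sdot_sum_smul]
    push_cast
    simp only [sub_eq_add_neg, neg_add]
  · rw [hXsrec (n - j) (by omega)]
    refine sum_congr rfl fun l _ => ?_
    rw [Nat.sub_sub]
  · rcases Nat.eq_zero_or_pos i with rfl | hi1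
    · simpa [hV0, Sdot] using (Int.modEq_zero_iff_dvd.2 dvd_rfl).symm
    · rw [hVe i hi1 (by omega), Sdot_single hi1 (by omega)]

/-- `S_n(X_{-i}) ≡ X^s_{n-i} (mod X^s_n)` for `1 ≤ i ≤ n - 1`. -/
theorem Sn_on_basis
    (k : ℕ) (hk : 2 ≤ k) (c : ℕ → ℤ)
    (hc1 : 0 < c 1) (hcnn : ∀ i, 2 ≤ i → i ≤ k - 1 → 0 ≤ c i) (hck : c k = 1)
    (Xs : ℕ → ℤ) (hXs1 : Xs 1 = 1)
    (hXsinit : ∀ n, 2 ≤ n → n ≤ k →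
      Xs n = (∑ i ∈ Finset.Icc 1 (n - 1), c i * Xs (n - i)) + 1)
    (hXsrec : ∀ n, k < n → Xs n = ∑ i ∈ Finset.Icc 1 k, c i * Xs (n - i))
    (V : ℤ → Fin (k - 1) → ℤ)
    (hV0 : V 0 = 0)
    (hVe : ∀ i : ℕ, 1 ≤ i → i ≤ k - 1 →
      V (-(i : ℤ)) = fun j : Fin (k - 1) => if (j : ℕ) + 1 = i then 1 else 0)
    (hVrec : ∀ n : ℤ, V n = ∑ l ∈ Finset.Icc 1 k, c l • V (n - (l : ℤ)))
    (n : ℕ) (hn : k - 2 ≤ n) :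
    ∀ i : ℕ, 1 ≤ i → i ≤ n - 1 →
      Int.ModEq (Xs n) (Sdot k n Xs (V (-(i : ℤ)))) (Xs (n - i)) :=
  Sn_on_basis_general k hk c hck Xs hXsrec V hV0 hVe hVrec n
end

section
/- Let c = (c_1, ..., c_k) with c_1 > 0, c_i ≥ 0, c_k = 1, and let z be the maximum number of consecutive zeroes in (c_1, ..., c_{k-1}). Then the vectors X_{-1}, X_{-2}, ..., X_{-(k+z)} of the c-recurrence vector sequence span Z^{k-1} over the nonnegative integers: every v ∈ Z^{k-1} can be written as v = Σ_{n=1}^{k+z} a_n X_{-n} with each a_n a nonnegative integer. -/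
/-!
Let `C` be the ℕ-cone spanned by `X_{-1}, …, X_{-(k+z)}`. It contains the unit vectors
`X_{-i} = e_i` (`1 ≤ i ≤ k - 1`), so it is everything once it contains each `-X_{-i}`.
Choose `m < i` with `m ≤ z` and `c_{i-m} > 0` (runs of zeroes have length at most `z`, and
`c_1 > 0`). The recurrence at `n = -m`, solved for `X_{-(m+k)}`, gives
`c_{i-m} • (-X_{-i}) = X_{-(m+k)} - X_{-m} + ∑_{l ≠ i-m} c_l • X_{-(m+l)}`,
whose right side lies in `C` by strong induction on `i` (with `X_0 = 0`); then
`-X_{-i} = c_{i-m} • (-X_{-i}) + (c_{i-m} - 1) • X_{-i} ∈ C`.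
-/

open Finset

theorem AddSubmonoid.eq_top_of_neg_mem_of_closure_eq_top {G : Type*} [AddGroup G]
    {S : AddSubmonoid G} {s : Set G} (hs : AddSubgroup.closure s = ⊤)
    (hS : ∀ x ∈ s, x ∈ S ∧ -x ∈ S) : S = ⊤ := by
  rw [eq_top_iff, ← AddSubgroup.top_toAddSubmonoid, ← hs, AddSubgroup.closure_toAddSubmonoid]
  refine AddSubmonoid.closure_le.2 ?_
  rintro x (hx | hx)
  · exact (hS x hx).1
  · simpa using (hS (-x) hx).2

theorem Pi.addSubgroupClosure_range_basisFun (ι : Type*) [Finite ι] :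
    AddSubgroup.closure (Set.range (Pi.basisFun ℤ ι)) = ⊤ := by
  rw [← Submodule.span_int_eq_addSubgroupClosure, (Pi.basisFun ℤ ι).span_eq,
    Submodule.top_toAddSubgroup]

theorem Submodule.zsmul_mem_of_nonneg {M : Type*} [AddCommGroup M] (C : Submodule ℕ M)
    {q : ℤ} (hq : 0 ≤ q) {x : M} (hx : x ∈ C) : q • x ∈ C := by
  lift q to ℕ using hq
  rw [natCast_zsmul]
  exact C.smul_mem q hx

namespace CRecurrence

variable {M : Type*} [AddCommGroup M] (V : ℤ → M)

def cone (N : ℕ) : Submodule ℕ M :=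
  Submodule.span ℕ ((fun n : ℕ => V (-n)) '' ↑(Icc 1 N))

theorem mem_cone_iff {N : ℕ} {x : M} :
    x ∈ cone V N ↔ ∃ a : ℕ → ℕ, x = ∑ n ∈ Icc 1 N, (a n : ℤ) • V (-n) := by
  simp only [cone, Submodule.mem_span_image_finset_iff_exists_fun', natCast_zsmul, eq_comm]

theorem mem_cone {N : ℕ} {n : ℤ} (h1 : n ≤ -1) (hN : -N ≤ n) : V n ∈ cone V N :=
  Submodule.subset_span
    ⟨(-n).toNat, by simp; omega, by simp [Int.toNat_of_nonneg (by omega : 0 ≤ -n)]⟩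

theorem sub_eq_sub_sum_Ico {c : ℕ → ℤ} {k : ℕ} (hk : 1 ≤ k) (hck : c k = 1)
    (hVrec : ∀ n : ℤ, V n = ∑ l ∈ Icc 1 k, c l • V (n - l)) (n : ℤ) :
    V (n - k) = V n - ∑ l ∈ Ico 1 k, c l • V (n - l) := by
  rw [hVrec n, ← Ico_insert_right hk, sum_insert (by simp), hck, one_smul]
  abel

-- The `z + 1` indices `i - z, …, i` cannot all carry a zero coefficient.
theorem exists_pos_coeff_of_zero_runs_le {c : ℕ → ℤ} {k z : ℕ} (hc1 : 0 < c 1)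
    (hc : ∀ l, 1 ≤ l → l < k → 0 ≤ c l)
    (hzub : ∀ i l : ℕ, 1 ≤ i → i + l ≤ k → (∀ j, i ≤ j → j < i + l → c j = 0) → l ≤ z)
    {i : ℕ} (hi : 1 ≤ i) (hik : i < k) : ∃ m < i, m ≤ z ∧ 0 < c (i - m) := by
  by_cases hiz : i - 1 ≤ z
  · exact ⟨i - 1, by omega, hiz, by rwa [Nat.sub_sub_self hi]⟩
  by_contra! hcon
  have hrun : ∀ j, i - z ≤ j → j < i - z + (z + 1) → c j = 0 := fun j hj₁ hj₂ => by
    have hj := hcon (i - j) (by omega) (by omega)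
    rw [Nat.sub_sub_self (by omega)] at hj
    exact le_antisymm hj (hc j (by omega) (by omega))
  have := hzub (i - z) (z + 1) (by omega) (by omega) hrun
  omega

theorem neg_mem_cone {c : ℕ → ℤ} {k N : ℕ} (hV0 : V 0 = 0) (hck : c k = 1)
    (hc : ∀ l, 1 ≤ l → l < k → 0 ≤ c l)
    (hVrec : ∀ n : ℤ, V n = ∑ l ∈ Icc 1 k, c l • V (n - l))
    (hpos : ∀ i, 1 ≤ i → i < k → ∃ m < i, m + k ≤ N ∧ 0 < c (i - m)) :
    ∀ i < k, -V (-i) ∈ cone V N := by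
  intro i
  induction i using Nat.strong_induction_on with
  | _ i ih =>
  intro hik
  rcases Nat.eq_zero_or_pos i with rfl | hi
  · simp [hV0]
  obtain ⟨m, hmi, hmN, hcm⟩ := hpos i hi hik
  have hl : i - m ∈ Ico 1 k := mem_Ico.2 ⟨by omega, by omega⟩
  have hVi : V (-i) = V (-m - (i - m : ℕ)) := by congr 1; push_cast [hmi.le]; ring
  have key : c (i - m) • -V (-i) = V (-m - k) + -V (-m) +
      ∑ l ∈ (Ico 1 k).erase (i - m), c l • V (-m - l) := by
    rw [sub_eq_sub_sum_Ico V (by omega) hck hVrec, ← add_sum_erase _ _ hl, hVi, smul_neg]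
    abel
  have hmem : c (i - m) • -V (-i) ∈ cone V N := by
    rw [key]
    refine add_mem (add_mem (mem_cone V (by omega) (by omega)) (ih m hmi (by omega)))
      (sum_mem fun l hl => ?_)
    obtain ⟨hl₁, hl₂⟩ := mem_Ico.1 (mem_of_mem_erase hl)
    exact (cone V N).zsmul_mem_of_nonneg (hc l hl₁ hl₂) (mem_cone V (by omega) (by omega))
  have hsplit : -V (-i) = c (i - m) • -V (-i) + (c (i - m) - 1) • V (-i) := by
    rw [smul_neg, sub_smul, one_smul]
    abel
  rw [hsplit]
  exact add_mem hmem
    ((cone V N).zsmul_mem_of_nonneg (by omega) (mem_cone V (by omega) (by omega)))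

end CRecurrence

theorem crec_vectors_span_general
    (k : ℕ) (c : ℕ → ℤ)
    (hc1 : 0 < c 1) (hcnn : ∀ i, 2 ≤ i → i ≤ k - 1 → 0 ≤ c i) (hck : c k = 1)
    (V : ℤ → Fin (k - 1) → ℤ)
    (hV0 : V 0 = 0)
    (hVe : ∀ i : ℕ, 1 ≤ i → i ≤ k - 1 →
      V (-(i : ℤ)) = fun j : Fin (k - 1) => if (j : ℕ) + 1 = i then 1 else 0)
    (hVrec : ∀ n : ℤ, V n = ∑ l ∈ Finset.Icc 1 k, c l • V (n - (l : ℤ)))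
    (z : ℕ)
    (hzub : ∀ i l : ℕ, 1 ≤ i → i + l ≤ k →
      (∀ j, i ≤ j → j < i + l → c j = 0) → l ≤ z) :
    ∀ v : Fin (k - 1) → ℤ, ∃ a : ℕ → ℕ,
      v = ∑ n ∈ Finset.Icc 1 (k + z), (a n : ℤ) • V (-(n : ℤ)) := by
  have hc : ∀ l, 1 ≤ l → l < k → 0 ≤ c l := fun l hl₁ hl₂ => by
    rcases hl₁.eq_or_lt with rfl | hl₁
    exacts [hc1.le, hcnn l hl₁ (by omega)]
  have hneg := CRecurrence.neg_mem_cone V hV0 hck hc hVrec (N := k + z) fun i hi hik => by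
    obtain ⟨m, hmi, hmz, hcm⟩ := CRecurrence.exists_pos_coeff_of_zero_runs_le hc1 hc hzub hi hik
    exact ⟨m, hmi, by omega, hcm⟩
  have hbasis : ∀ j : Fin (k - 1), Pi.basisFun ℤ _ j = V (-((j : ℕ) + 1 : ℕ)) := fun j => by
    rw [hVe _ (by omega) (by omega), Pi.basisFun_apply]
    ext j'
    simp [Pi.single_apply, eq_comm, Fin.val_inj]
  have htop : (CRecurrence.cone V (k + z)).toAddSubmonoid = ⊤ :=
    AddSubmonoid.eq_top_of_neg_mem_of_closure_eq_top
      (Pi.addSubgroupClosure_range_basisFun _) <| by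
        rintro _ ⟨j, rfl⟩
        rw [hbasis]
        exact ⟨CRecurrence.mem_cone V (by omega) (by omega), hneg _ (by omega)⟩
  exact fun v => (CRecurrence.mem_cone_iff V).1 ((AddSubmonoid.eq_top_iff' _).1 htop v)

/-- If z is the maximum number of consecutive zeroes among c_1, …, c_{k-1}, then the
vectors X_{-1}, …, X_{-(k+z)} span ℤ^{k-1} over the nonnegative integers. -/
theorem crec_vectors_span
    (k : ℕ) (hk : 2 ≤ k) (c : ℕ → ℤ)
    (hc1 : 0 < c 1) (hcnn : ∀ i, 2 ≤ i → i ≤ k - 1 → 0 ≤ c i) (hck : c k = 1)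
    (V : ℤ → Fin (k - 1) → ℤ)
    (hV0 : V 0 = 0)
    (hVe : ∀ i : ℕ, 1 ≤ i → i ≤ k - 1 →
      V (-(i : ℤ)) = fun j : Fin (k - 1) => if (j : ℕ) + 1 = i then 1 else 0)
    (hVrec : ∀ n : ℤ, V n = ∑ l ∈ Finset.Icc 1 k, c l • V (n - (l : ℤ)))
    (z : ℕ)
    (hzub : ∀ i l : ℕ, 1 ≤ i → i + l ≤ k →
      (∀ j, i ≤ j → j < i + l → c j = 0) → l ≤ z)
    (hzex : z = 0 ∨ ∃ i : ℕ, 1 ≤ i ∧ i + z ≤ k ∧ ∀ j, i ≤ j → j < i + z → c j = 0) :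
    ∀ v : Fin (k - 1) → ℤ, ∃ a : ℕ → ℕ,
      v = ∑ n ∈ Finset.Icc 1 (k + z), (a n : ℤ) • V (-(n : ℤ)) :=
  crec_vectors_span_general k c hc1 hcnn hck V hV0 hVe hVrec z hzub
end

section
/- Let c = (c_1, ..., c_k) with c_j = 0 being a p-th consecutive zero (i.e., c_{j-1} = ... = c_{j-p+1} = 0 but c_{j-p} ≠ 0), where 1 ≤ p. Then the j-th entry of each vector X_{-k}, X_{-k-1}, ..., X_{-k-p+1} is zero, and the j-th entry of X_{-k-p} equals -c_{j-p}, which is negative. -/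
/-!
Reading the recurrence at `n = -q` and solving for the term with `c_k = 1` expresses `X_{-k-q}`
through `X_{-q}, …, X_{-q-k+1}`. For `q < j` the `j`-th entry of `X_{-q}` vanishes, and among
`X_{-q-l}` only those with `q + l ≥ k` are not initial vectors; these are `X_{-k-r}` with `r < q`,
whose `j`-th entry is `-c_{j-r} = 0` by induction. The only surviving term is `l = j - q`, so the
`j`-th entry of `X_{-k-q}` is `-c_{j-q}`.
-/

open Finset

section Recurrence

variable {R : Type*} [Ring R] {c : ℕ → R} {k : ℕ}

theorem apply_sub_eq_sub_sum_of_recurrence {M : Type*} [AddCommGroup M] [Module R M]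
    {V : ℤ → M} (hk : 1 ≤ k) (hck : c k = 1)
    (hrec : ∀ n : ℤ, V n = ∑ l ∈ Icc 1 k, c l • V (n - l)) (n : ℤ) :
    V (n - k) = V n - ∑ l ∈ Icc 1 (k - 1), c l • V (n - l) := by
  obtain ⟨k, rfl⟩ : ∃ m, k = m + 1 := ⟨k - 1, by omega⟩
  rw [hrec n, sum_Icc_succ_top (by omega), hck, one_smul, Nat.add_sub_cancel]
  abel

theorem apply_neg_sub_eq_neg_coeff {x : ℤ → R} (hck : c k = 1)
    (hrec : ∀ n : ℤ, x n = ∑ l ∈ Icc 1 k, c l * x (n - l)) {j : ℕ} (hjk : j ≤ k - 1)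
    (hinit : ∀ m : ℕ, m ≤ k - 1 → x (-m) = if m = j then 1 else 0) :
    ∀ q < j, (∀ r < q, c (j - r) = 0) → x (-k - q) = -c (j - q) := by
  intro q
  induction q using Nat.strong_induction_on with
  | _ q ih =>
  intro hqj hzero
  have hstep := apply_sub_eq_sub_sum_of_recurrence (M := R) (by omega) hck
    (by simpa only [smul_eq_mul] using hrec) (-q)
  have hterm : ∀ l ∈ Icc 1 (k - 1), c l • x (-q - l) = if l = j - q then c (j - q) else 0 := by
    intro l hl
    rw [mem_Icc] at hl
    rw [smul_eq_mul]
    by_cases hql : q + l ≤ k - 1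
    · rw [show -(q : ℤ) - l = -((q + l : ℕ) : ℤ) by push_cast; ring, hinit _ hql]
      by_cases hl' : l = j - q
      · rw [if_pos (by omega), if_pos hl', mul_one, hl']
      · rw [if_neg (by omega), if_neg hl', mul_zero]
    · have hr : q + l - k < q := by omega
      rw [show -(q : ℤ) - l = -k - ((q + l - k : ℕ) : ℤ) by omega,
        ih _ hr (by omega) fun r hr' => hzero r (by omega), hzero _ hr, if_neg (by omega), neg_zero, mul_zero]
  rw [sum_congr rfl hterm, sum_ite_eq', if_pos (by rw [mem_Icc]; omega), hinit q (by omega),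
    if_neg (by omega), zero_sub] at hstep
  rwa [neg_sub_comm] at hstep

end Recurrence

theorem initial_vector_entry_eq_ite {R : Type*} [Semiring R] {k : ℕ} {V : ℤ → Fin (k - 1) → R}
    (hV0 : V 0 = 0)
    (hVe : ∀ i : ℕ, 1 ≤ i → i ≤ k - 1 →
      V (-(i : ℤ)) = fun j : Fin (k - 1) => if (j : ℕ) + 1 = i then 1 else 0)
    {j : ℕ} (hj : 1 ≤ j) (hjk : j - 1 < k - 1) (m : ℕ) (hm : m ≤ k - 1) :
    V (-m) ⟨j - 1, hjk⟩ = if m = j then 1 else 0 := by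
  rcases Nat.eq_zero_or_pos m with rfl | hm0
  · rw [Nat.cast_zero, neg_zero, hV0, if_neg (by omega), Pi.zero_apply]
  · rw [hVe m hm0 hm]
    exact if_congr (by dsimp only; omega) rfl rfl

/-- If c_j = 0 is a p-th consecutive zero (c_{j-1} = ⋯ = c_{j-p+1} = 0, c_{j-p} ≠ 0),
then the j-th entry of X_{-k}, …, X_{-k-p+1} is zero, and the j-th entry of
X_{-k-p} is -c_{j-p}, which is negative. -/
theorem crec_vector_entry_consecutive_zeros
    (k : ℕ) (c : ℕ → ℤ)
    (hcnn : ∀ i, 1 ≤ i → i ≤ k - 1 → 0 ≤ c i) (hck : c k = 1)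
    (V : ℤ → Fin (k - 1) → ℤ)
    (hV0 : V 0 = 0)
    (hVe : ∀ i : ℕ, 1 ≤ i → i ≤ k - 1 →
      V (-(i : ℤ)) = fun j : Fin (k - 1) => if (j : ℕ) + 1 = i then 1 else 0)
    (hVrec : ∀ n : ℤ, V n = ∑ l ∈ Finset.Icc 1 k, c l • V (n - (l : ℤ)))
    (j p : ℕ) (hj1 : 1 ≤ j) (hj2 : j ≤ k - 1) (hpj : p < j)
    (hcj : c j = 0)
    (hzeros : ∀ q, 1 ≤ q → q ≤ p - 1 → c (j - q) = 0)
    (hcjp : c (j - p) ≠ 0) :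
    (∀ q : ℕ, q ≤ p - 1 → V (-(k : ℤ) - (q : ℤ)) ⟨j - 1, by omega⟩ = 0) ∧
    V (-(k : ℤ) - (p : ℤ)) ⟨j - 1, by omega⟩ = -c (j - p) ∧
    V (-(k : ℤ) - (p : ℤ)) ⟨j - 1, by omega⟩ < 0 := by
  have hrec : ∀ n : ℤ, V n ⟨j - 1, by omega⟩ =
      ∑ l ∈ Icc 1 k, c l * V (n - l) ⟨j - 1, by omega⟩ := fun n => by
    rw [hVrec n, Finset.sum_apply]
    rfl
  have hvanish : ∀ r ≤ p - 1, c (j - r) = 0 := by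
    intro r hr
    rcases Nat.eq_zero_or_pos r with rfl | hr0
    · exact hcj
    · exact hzeros r hr0 hr
  have hentry : ∀ q ≤ p, V (-k - q) ⟨j - 1, by omega⟩ = -c (j - q) := fun q hq =>
    apply_neg_sub_eq_neg_coeff hck hrec hj2 (initial_vector_entry_eq_ite hV0 hVe hj1 _)
      q (by omega) fun r hr => hvanish r (by omega)
  have hpos : 0 < c (j - p) := (hcnn (j - p) (by omega) (by omega)).lt_of_ne' hcjp
  refine ⟨fun q hq => ?_, hentry p le_rfl, by rw [hentry p le_rfl]; omega⟩
  rw [hentry q (by omega), hvanish q hq, neg_zero]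
end

section
/- Let c = (c_1, ..., c_k) be weakly decreasing with c_k = 1, and suppose a = (a_n) is a c-nearly satisfying representation of a vector v ∈ Z^{k-1}. Then a can be transformed into a c-satisfying representation of v by a finite number of borrowing and carrying operations. -/
/-!
If a finitely supported digit string `x` is not a c-SR, some block `x (i + 1), …, x (i + k)` is
lexicographically at least `c 1, …, c k`. Then a carry into `i` is legal, after a borrow from the
first position `i + s` where the block exceeds `c` (if there is one): the borrow adds
`c (l - s) ≥ c l` to the later positions. This move raises `x i` by one and fixes all earlier
digits, so the string grows lexicographically; by the recurrence it keeps the represented vector;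
and since every `c l ≥ 1` it does not increase the digit sum. Strings of bounded digit sum admit no
infinite lexicographically increasing sequence, so repeating the move ends at a c-SR.
-/

/-- `IsSR k c a` : the (1-indexed) sequence `a` is a c-satisfying representation string,
i.e. it decomposes, reading left to right, into blocks
`c_1, …, c_{s-1}, (digit < c_s), 0, …, 0`, possibly ending with a truncated block
equal to a proper initial segment of `c`. -/
inductive IsSR (k : ℕ) (c : ℕ → ℤ) : (ℕ → ℕ) → Prop where
  | zero (a : ℕ → ℕ) (h : ∀ n, 1 ≤ n → a n = 0) : IsSR k c a
  | cprefix (a : ℕ → ℕ) (m : ℕ) (h1 : 1 ≤ m) (h2 : m < k)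
      (h3 : ∀ n, 1 ≤ n → n ≤ m → (a n : ℤ) = c n)
      (h4 : ∀ n, m < n → a n = 0) : IsSR k c a
  | chunk (a : ℕ → ℕ) (s ℓ : ℕ) (hs1 : 1 ≤ s) (hs2 : s ≤ k)
      (h1 : ∀ n, 1 ≤ n → n < s → (a n : ℤ) = c n)
      (h2 : (a s : ℤ) < c s)
      (h3 : ∀ i, 1 ≤ i → i ≤ ℓ → a (s + i) = 0)
      (h4 : IsSR k c (fun n => a (s + ℓ + n))) : IsSR k c a

/-- Carrying into index `i`: increment `a_i` by 1 and decrement `a_{i+l}` by `c_l`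
for `1 ≤ l ≤ k` (only allowed when all resulting entries stay nonnegative). -/
def CarryOp (k : ℕ) (c : ℕ → ℤ) (i : ℕ) (a b : ℕ → ℕ) : Prop :=
  b i = a i + 1 ∧
  (∀ l, 1 ≤ l → l ≤ k → (b (i + l) : ℤ) = (a (i + l) : ℤ) - c l) ∧
  (∀ n, n < i ∨ i + k < n → b n = a n)

/-- Borrowing from index `i`: decrement `a_i` by 1 and increment `a_{i+l}` by `c_l`
for `1 ≤ l ≤ k` (only allowed when `a_i ≥ 1`). -/
def BorrowOp (k : ℕ) (c : ℕ → ℤ) (i : ℕ) (a b : ℕ → ℕ) : Prop :=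
  a i = b i + 1 ∧
  (∀ l, 1 ≤ l → l ≤ k → (b (i + l) : ℤ) = (a (i + l) : ℤ) + c l) ∧
  (∀ n, n < i ∨ i + k < n → b n = a n)

open Finset

theorem sum_range_le_of_forall_gt {f : ℕ → ℕ} {T : ℕ} (hf : ∀ n, T < n → f n = 0) (N : ℕ) :
    ∑ n ∈ range N, f n ≤ ∑ n ∈ range (T + 1), f n :=
  calc ∑ n ∈ range N, f n ≤ ∑ n ∈ range (max N (T + 1)), f n :=
        sum_le_sum_of_subset (range_subset_range.2 (le_max_left _ _))
    _ = _ := eventually_constant_sum (fun n hn => hf n hn) (le_max_right _ _)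

theorem sum_range_succ_eq_sum_Icc {M : Type*} [AddCommMonoid M] {f : ℕ → M} (h0 : f 0 = 0)
    (N : ℕ) : ∑ n ∈ range (N + 1), f n = ∑ n ∈ Icc 1 N, f n := by
  rw [range_eq_Ico, sum_eq_sum_Ico_succ_bot (by omega : 0 < N + 1), h0, zero_add,
    Ico_add_one_right_eq_Icc]

theorem sum_Icc_ite_eq_add {M : Type*} [AddCommMonoid M] (k i n : ℕ) (f : ℕ → M) :
    ∑ l ∈ Icc 1 k, (if n = i + l then f l else 0) =
      if i < n ∧ n ≤ i + k then f (n - i) else 0 := by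
  rw [sum_congr rfl fun l hl => if_congr (show n = i + l ↔ l = n - i by grind) rfl rfl,
    sum_ite_eq']
  exact if_congr (by simp only [mem_Icc]; omega) rfl rfl

def BoundedLexSucc (S : ℕ) (y x : ℕ → ℕ) : Prop :=
  (∀ N, ∑ n ∈ range N, y n ≤ S) ∧ Pi.Lex (· < ·) (· < ·) x y

theorem sum_range_shift_add_le {S : ℕ} {x : ℕ → ℕ} (hx : ∀ N, ∑ n ∈ range N, x n ≤ S)
    (p N : ℕ) : ∑ n ∈ range N, x (p + 1 + n) + x p ≤ S := by
  have h := hx (p + 1 + N)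
  rw [sum_range_add, sum_range_succ] at h
  omega

theorem acc_boundedLexSucc_of_acc_shift {S p m : ℕ}
    (hlow : ∀ q < p, ∀ y : ℕ → ℕ, (∀ N, ∑ n ∈ range N, y n ≤ S) → y q ≠ 0 →
      Acc (BoundedLexSucc S) y)
    (hhigh : ∀ y : ℕ → ℕ, (∀ N, ∑ n ∈ range N, y n ≤ S) → (∀ q < p, y q = 0) → m < y p →
      Acc (BoundedLexSucc S) y)
    {t : ℕ → ℕ} (ht : Acc (BoundedLexSucc (S - m)) t) :
    ∀ x : ℕ → ℕ, (∀ N, ∑ n ∈ range N, x n ≤ S) → (∀ q < p, x q = 0) → x p = m →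
      (fun n => x (p + 1 + n)) = t → Acc (BoundedLexSucc S) x := by
  induction ht with
  | intro t _ iht =>
  rintro x hxS hxlow rfl rfl
  refine Acc.intro x fun y ⟨hyS, i, hagree, hlt⟩ => ?_
  rcases lt_trichotomy i p with hip | rfl | hpi
  · exact hlow i hip y hyS (by have := hxlow i hip; omega)
  · exact hhigh y hyS (fun q hq => (hagree q hq).symm.trans (hxlow q hq)) hlt
  have hxy : x p = y p := hagree p hpi
  refine iht _ ⟨fun N => ?_, i - (p + 1), fun j hj => hagree _ (by omega), ?_⟩ y hyS
    (fun q hq => (hagree q (by omega)).symm.trans (hxlow q hq)) hxy.symm rfl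
  · have := sum_range_shift_add_le hyS p N
    omega
  · simpa [show p + 1 + (i - (p + 1)) = i by omega] using hlt

theorem acc_boundedLexSucc_of_ne_zero {S : ℕ} (ih : ∀ S' < S, WellFounded (BoundedLexSucc S'))
    (p : ℕ) (x : ℕ → ℕ) (hxS : ∀ N, ∑ n ∈ range N, x n ≤ S) (hxp : x p ≠ 0) :
    Acc (BoundedLexSucc S) x := by
  -- induct on the first nonzero position `p`, then on `S - x p`; beyond `p` the digit sum is at
  -- most `S - x p < S`, which is where the induction on `S` enters
  induction p using Nat.strong_induction_on generalizing x with
  | _ p ihp =>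
  by_cases hlow : ∃ q < p, x q ≠ 0
  · obtain ⟨q, hq, hxq⟩ := hlow
    exact ihp q hq x hxS hxq
  push Not at hlow
  induction hd : S - x p using Nat.strong_induction_on generalizing x with
  | _ d ihd =>
  have hxpS := sum_range_shift_add_le hxS p 0
  refine acc_boundedLexSucc_of_acc_shift (fun q hq y hyS hyq => ihp q hq y hyS hyq)
    (fun y hyS hylow hlt => ?_) ((ih _ (by omega)).apply _) x hxS hlow rfl rfl
  have hypS := sum_range_shift_add_le hyS p 0
  exact ihd _ (by omega) y hyS (by omega) hylow rfl

theorem wellFounded_boundedLexSucc (S : ℕ) : WellFounded (BoundedLexSucc S) := by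
  induction S using Nat.strong_induction_on with
  | _ S ih =>
  exact ⟨fun x => Acc.intro x fun y ⟨hyS, i, _, hlt⟩ =>
    acc_boundedLexSucc_of_ne_zero ih i y hyS (by omega)⟩

section Operations
variable {k : ℕ} {c : ℕ → ℤ} {i : ℕ} {x y : ℕ → ℕ}

theorem CarryOp.cast_apply (h : CarryOp k c i x y) (n : ℕ) :
    (y n : ℤ) = x n + (if n = i then 1 else 0) - ∑ l ∈ Icc 1 k, if n = i + l then c l else 0 := by
  obtain ⟨hi, hblock, hout⟩ := h
  rw [sum_Icc_ite_eq_add]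
  by_cases hni : n = i
  · subst hni; simp [hi]
  by_cases hn : i < n ∧ n ≤ i + k
  · have := hblock (n - i) (by omega) (by omega)
    rw [show i + (n - i) = n by omega] at this
    simp [hni, hn, this]
  · simp [hni, hn, hout n (by omega)]

theorem CarryOp.sum_range_smul {M : Type*} [AddCommGroup M] (h : CarryOp k c i x y) (w : ℕ → M)
    {N : ℕ} (hN : i + k < N) :
    ∑ n ∈ range N, (y n : ℤ) • w n =
      ∑ n ∈ range N, (x n : ℤ) • w n + (w i - ∑ l ∈ Icc 1 k, c l • w (i + l)) := by
  simp only [h.cast_apply, add_smul, sub_smul, sum_smul, ite_smul, one_smul, zero_smul,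
    sum_add_distrib, sum_sub_distrib]
  rw [sum_ite_eq', if_pos (mem_range.2 (by omega)), sum_comm, add_sub_assoc]
  congr 2
  refine sum_congr rfl fun l hl => ?_
  rw [sum_ite_eq', if_pos (mem_range.2 (by simp only [mem_Icc] at hl; omega))]

theorem CarryOp.sum_range_cast (h : CarryOp k c i x y) {N : ℕ} (hN : i + k < N) :
    ∑ n ∈ range N, (y n : ℤ) = ∑ n ∈ range N, (x n : ℤ) + (1 - ∑ l ∈ Icc 1 k, c l) := by
  simpa using h.sum_range_smul (fun _ => (1 : ℤ)) hN

theorem BorrowOp.carryOp (h : BorrowOp k c i x y) : CarryOp k c i y x :=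
  ⟨h.1, fun l h1 h2 => by linarith [h.2.1 l h1 h2], fun n hn => (h.2.2 n hn).symm⟩

theorem exists_carryOp (h : ∀ l, 1 ≤ l → l ≤ k → c l ≤ x (i + l)) : ∃ y, CarryOp k c i x y := by
  refine ⟨fun n => if n = i then x i + 1 else if i < n ∧ n ≤ i + k then (x n - c (n - i)).toNat
    else x n, by simp, fun l h1 h2 => ?_, fun n hn => ?_⟩
  · beta_reduce
    rw [if_neg (by omega), if_pos (by omega), Nat.add_sub_cancel_left,
      Int.toNat_of_nonneg (by linarith [h l h1 h2])]
  · beta_reduce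
    rw [if_neg (by omega), if_neg (by omega)]

theorem exists_borrowOp (hc : ∀ l, 1 ≤ l → l ≤ k → 0 ≤ c l) (h : 1 ≤ x i) :
    ∃ y, BorrowOp k c i x y := by
  refine ⟨fun n => if n = i then x i - 1 else if i < n ∧ n ≤ i + k then (x n + c (n - i)).toNat
    else x n, by simp; omega, fun l h1 h2 => ?_, fun n hn => ?_⟩
  · beta_reduce
    rw [if_neg (by omega), if_pos (by omega), Nat.add_sub_cancel_left,
      Int.toNat_of_nonneg (by linarith [hc l h1 h2])]
  · beta_reduce
    rw [if_neg (by omega), if_neg (by omega)]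

end Operations

def CarryBorrowStep (k : ℕ) (c : ℕ → ℤ) (x y : ℕ → ℕ) : Prop :=
  ∃ i, CarryOp k c i x y ∨ BorrowOp k c i x y

def BlockGE (k : ℕ) (c : ℕ → ℤ) (x : ℕ → ℕ) (i : ℕ) : Prop :=
  (∀ l, 1 ≤ l → l ≤ k → (x (i + l) : ℤ) = c l) ∨
    ∃ s, 1 ≤ s ∧ s ≤ k ∧ (∀ l, 1 ≤ l → l < s → (x (i + l) : ℤ) = c l) ∧ c s < x (i + s)

section Normalization
variable {k : ℕ} {c : ℕ → ℤ} {i : ℕ} {x : ℕ → ℕ}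

theorem BlockGE.shift {s : ℕ} (h : BlockGE k c (fun n => x (s + n)) i) :
    BlockGE k c x (s + i) := by
  simpa only [BlockGE, add_assoc] using h

theorem isSR_or_exists_blockGE (T : ℕ) (x : ℕ → ℕ) (hx : ∀ n, T < n → x n = 0) :
    IsSR k c x ∨ ∃ i, BlockGE k c x i := by
  induction T generalizing x with
  | zero => exact Or.inl (IsSR.zero x fun n hn => hx n (by omega))
  | succ T ih =>
  classical
  by_cases hfull : ∀ l, 1 ≤ l → l ≤ k → (x l : ℤ) = c l
  · exact Or.inr ⟨0, Or.inl (by simpa using hfull)⟩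
  push Not at hfull
  obtain ⟨hs1, hsk, hne⟩ := Nat.find_spec hfull
  set s := Nat.find hfull
  have hpre : ∀ l, 1 ≤ l → l < s → (x l : ℤ) = c l := fun l h1 hl => by
    by_contra hne'
    exact Nat.find_min hfull hl ⟨h1, by omega, hne'⟩
  rcases hne.lt_or_gt with hlt | hgt
  · rcases ih (fun n => x (s + n)) fun n hn => hx (s + n) (by omega) with hSR | ⟨i, hi⟩
    · exact Or.inl (IsSR.chunk x s 0 hs1 hsk hpre hlt (fun _ _ _ => by omega) hSR)
    · exact Or.inr ⟨s + i, hi.shift⟩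
  · exact Or.inr ⟨0, Or.inr ⟨s, hs1, hsk, by simpa using hpre, by simpa using hgt⟩⟩

theorem BlockGE.lt_of_forall_gt (hk : 1 ≤ k) (hc : ∀ l, 1 ≤ l → l ≤ k → 1 ≤ c l)
    (h : BlockGE k c x i) {T : ℕ} (hx : ∀ n, T < n → x n = 0) : i < T := by
  by_contra! hTi
  have hx1 := hx (i + 1) (by omega)
  have hc1 := hc 1 le_rfl hk
  rcases h with hblock | ⟨s, hs1, hsk, hpre, hsurplus⟩
  · have := hblock 1 le_rfl hk
    omega
  · rcases eq_or_lt_of_le hs1 with rfl | hs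
    · omega
    · have := hpre 1 le_rfl hs
      omega

theorem BlockGE.exists_borrow_carry (hc : ∀ l, 1 ≤ l → l ≤ k → 1 ≤ c l)
    (hanti : AntitoneOn c (Set.Icc 1 k)) (h : BlockGE k c x i) :
    ∃ z y, (z = x ∨ ∃ j, i < j ∧ j ≤ i + k ∧ BorrowOp k c j x z) ∧ CarryOp k c i z y := by
  rcases h with hblock | ⟨s, hs1, hsk, hpre, hsurplus⟩
  · obtain ⟨y, hy⟩ := exists_carryOp fun l h1 h2 => (hblock l h1 h2).ge
    exact ⟨x, y, Or.inl rfl, hy⟩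
  have hxs : 1 ≤ x (i + s) := by linarith [hc s hs1 hsk]
  obtain ⟨z, hz1, hz2, hz3⟩ :=
    exists_borrowOp (k := k) (c := c) (fun l h1 h2 => by linarith [hc l h1 h2]) hxs
  obtain ⟨y, hy⟩ : ∃ y, CarryOp k c i z y := by
    refine exists_carryOp fun l h1 h2 => ?_
    rcases lt_trichotomy l s with hls | rfl | hsl
    · rw [hz3 (i + l) (by omega), hpre l h1 hls]
    · omega
    · have := hz2 (l - s) (by omega) (by omega)
      rw [show i + s + (l - s) = i + l by omega] at this
      have := hanti ⟨(by omega : 1 ≤ l - s), by omega⟩ ⟨h1, h2⟩ (by omega : l - s ≤ l)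
      linarith [hc (l - s) (by omega) (by omega)]
  exact ⟨z, y, Or.inr ⟨i + s, by omega, by omega, hz1, hz2, hz3⟩, hy⟩

theorem BlockGE.exists_reflTransGen_lex {M : Type*} [AddCommGroup M] (hk : 1 ≤ k)
    (hc : ∀ l, 1 ≤ l → l ≤ k → 1 ≤ c l) (hanti : AntitoneOn c (Set.Icc 1 k))
    (w : ℕ → M) (hw : ∀ j, w j = ∑ l ∈ Icc 1 k, c l • w (j + l))
    {T : ℕ} (hx : ∀ n, T < n → x n = 0) (h : BlockGE k c x i) :
    ∃ y, Relation.ReflTransGen (CarryBorrowStep k c) x y ∧ Pi.Lex (· < ·) (· < ·) x y ∧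
      (∀ n, T + 2 * k < n → y n = 0) ∧ ∀ N, T + 2 * k < N →
        ∑ n ∈ range N, (y n : ℤ) • w n = ∑ n ∈ range N, (x n : ℤ) • w n ∧
        ∑ n ∈ range N, y n ≤ ∑ n ∈ range N, x n := by
  have hiT := h.lt_of_forall_gt hk hc hx
  obtain ⟨z, y, hz, hy⟩ := h.exists_borrow_carry hc hanti
  have hF : 1 ≤ ∑ l ∈ Icc 1 k, c l :=
    (hc 1 le_rfl hk).trans (single_le_sum (fun l hl => by
      simp only [mem_Icc] at hl; linarith [hc l hl.1 hl.2]) (by simp; omega))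
  obtain ⟨hxz, hzx, hzsum⟩ : Relation.ReflTransGen (CarryBorrowStep k c) x z ∧
      (∀ n, n ≤ i ∨ i + 2 * k < n → z n = x n) ∧ ∀ N, T + 2 * k < N →
        ∑ n ∈ range N, (z n : ℤ) • w n = ∑ n ∈ range N, (x n : ℤ) • w n ∧
        ∑ n ∈ range N, (z n : ℤ) ≤ ∑ n ∈ range N, (x n : ℤ) + (∑ l ∈ Icc 1 k, c l - 1) := by
    rcases hz with rfl | ⟨j, hij, hjk, hb⟩
    · exact ⟨.refl, fun _ _ => rfl, fun N _ => ⟨rfl, by linarith⟩⟩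
    refine ⟨.single ⟨j, Or.inr hb⟩, fun n hn => hb.2.2 n (by omega), fun N hN => ⟨?_, ?_⟩⟩
    · rw [hb.carryOp.sum_range_smul w (by omega), sub_eq_zero.2 (hw j), add_zero]
    · rw [hb.carryOp.sum_range_cast (by omega)]
      linarith
  refine ⟨y, hxz.tail ⟨i, Or.inl hy⟩, ⟨i, fun n hn => ?_, ?_⟩, fun n hn => ?_, fun N hN => ⟨?_, ?_⟩⟩
  · rw [hy.2.2 n (Or.inl hn), hzx n (by omega)]
  · simp only [hy.1, hzx i (by omega)]
    omega
  · rw [hy.2.2 n (by omega), hzx n (by omega), hx n (by omega)]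
  · rw [hy.sum_range_smul w (by omega), sub_eq_zero.2 (hw i), add_zero, (hzsum N hN).1]
  · have : ∑ n ∈ range N, (y n : ℤ) ≤ ∑ n ∈ range N, (x n : ℤ) := by
      linarith [(hzsum N hN).2, hy.sum_range_cast (N := N) (by omega)]
    exact_mod_cast this

theorem exists_reflTransGen_isSR {M : Type*} [AddCommGroup M] (hk : 1 ≤ k)
    (hc : ∀ l, 1 ≤ l → l ≤ k → 1 ≤ c l) (hanti : AntitoneOn c (Set.Icc 1 k))
    (w : ℕ → M) (hw : ∀ j, w j = ∑ l ∈ Icc 1 k, c l • w (j + l)) {S : ℕ}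
    (x : ℕ → ℕ) (hxS : ∀ N, ∑ n ∈ range N, x n ≤ S) (T : ℕ) (hx : ∀ n, T < n → x n = 0) :
    ∃ y N, Relation.ReflTransGen (CarryBorrowStep k c) x y ∧ IsSR k c y ∧
      (∀ n, N < n → y n = 0) ∧
      ∑ n ∈ range (N + 1), (y n : ℤ) • w n = ∑ n ∈ range (T + 1), (x n : ℤ) • w n := by
  induction x using (wellFounded_boundedLexSucc S).induction generalizing T with
  | _ x ih =>
  rcases isSR_or_exists_blockGE T x hx with hSR | ⟨i, hi⟩
  · exact ⟨x, T, .refl, hSR, hx, rfl⟩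
  obtain ⟨y, hxy, hlex, hy, hysum⟩ := hi.exists_reflTransGen_lex hk hc hanti w hw hx
  obtain ⟨hyw, hycount⟩ := hysum (T + 2 * k + 1) (by omega)
  have hyS : ∀ N, ∑ n ∈ range N, y n ≤ S := fun N =>
    ((sum_range_le_of_forall_gt hy N).trans hycount).trans (hxS _)
  obtain ⟨b, N, hyb, hb, hbN, hbw⟩ := ih y ⟨hyS, hlex⟩ hyS (T + 2 * k) hy
  refine ⟨b, N, hxy.trans hyb, hb, hbN, ?_⟩
  rw [hbw, hyw, eventually_constant_sum (N := T + 1) (fun n hn => by simp [hx n hn]) (by omega)]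

end Normalization

theorem cNSR_to_cSR_general
    (k : ℕ) (hk : 2 ≤ k) (c : ℕ → ℤ)
    (hdec : ∀ i, 1 ≤ i → i < k → c (i + 1) ≤ c i) (hck : c k = 1)
    (V : ℤ → Fin (k - 1) → ℤ)
    (hV0 : V 0 = 0)
    (hVrec : ∀ n : ℤ, V n = ∑ l ∈ Finset.Icc 1 k, c l • V (n - (l : ℤ)))
    (v : Fin (k - 1) → ℤ) (a : ℕ → ℕ)
    (M : ℕ) (hsupp : ∀ n, M < n → a n = 0)
    (hrep : v = ∑ n ∈ Finset.Icc 1 M, (a n : ℤ) • V (-(n : ℤ))) :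
    ∃ b : ℕ → ℕ,
      Relation.ReflTransGen
        (fun x y => ∃ i, CarryOp k c i x y ∨ BorrowOp k c i x y) a b ∧
      IsSR k c b ∧
      ∃ N : ℕ, (∀ n, N < n → b n = 0) ∧
        v = ∑ n ∈ Finset.Icc 1 N, (b n : ℤ) • V (-(n : ℤ)) := by
  have hanti : AntitoneOn c (Set.Icc 1 k) :=
    antitoneOn_of_add_one_le Set.ordConnected_Icc fun l _ hl hl1 =>
      hdec l hl.1 (by simp only [Set.mem_Icc] at hl1; omega)
  have hc : ∀ l, 1 ≤ l → l ≤ k → 1 ≤ c l := fun l h1 h2 =>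
    hck ▸ hanti ⟨h1, h2⟩ ⟨by omega, le_rfl⟩ h2
  have hw (j : ℕ) : V (-(j : ℤ)) = ∑ l ∈ Icc 1 k, c l • V (-((j + l : ℕ) : ℤ)) := by
    rw [hVrec]
    push_cast
    simp_rw [neg_add']
  obtain ⟨b, N, hab, hb, hbN, hbv⟩ := exists_reflTransGen_isSR (by omega) hc hanti _ hw a
    (sum_range_le_of_forall_gt hsupp) M hsupp
  refine ⟨b, hab, hb, N, hbN, ?_⟩
  -- carries may reach position `0`, which lies outside the representation but has weight `V 0 = 0`
  rw [hrep, ← sum_range_succ_eq_sum_Icc (by simp [hV0]), ← hbv,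
    sum_range_succ_eq_sum_Icc (by simp [hV0])]

/-- Every c-nearly satisfying representation of a vector `v` (for weakly decreasing `c`
with `c_k = 1`) can be transformed into a c-satisfying representation of `v` by a
finite number of borrowing and carrying operations. -/
theorem cNSR_to_cSR
    (k : ℕ) (hk : 2 ≤ k) (c : ℕ → ℤ)
    (hc1 : 0 < c 1)
    (hdec : ∀ i, 1 ≤ i → i < k → c (i + 1) ≤ c i) (hck : c k = 1)
    (V : ℤ → Fin (k - 1) → ℤ)
    (hV0 : V 0 = 0)
    (hVe : ∀ i : ℕ, 1 ≤ i → i ≤ k - 1 →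
      V (-(i : ℤ)) = fun j : Fin (k - 1) => if (j : ℕ) + 1 = i then 1 else 0)
    (hVrec : ∀ n : ℤ, V n = ∑ l ∈ Finset.Icc 1 k, c l • V (n - (l : ℤ)))
    (v : Fin (k - 1) → ℤ) (a : ℕ → ℕ)
    (M : ℕ) (hsupp : ∀ n, M < n → a n = 0)
    (hrep : v = ∑ n ∈ Finset.Icc 1 M, (a n : ℤ) • V (-(n : ℤ)))
    -- `a` is a c-NSR: not a c-SR, but decrementing a single coefficient gives a c-SR
    (hnot : ¬ IsSR k c a)
    (hnear : ∃ i, 1 ≤ i ∧ 1 ≤ a i ∧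
      IsSR k c (fun n => if n = i then a n - 1 else a n)) :
    ∃ b : ℕ → ℕ,
      Relation.ReflTransGen
        (fun x y => ∃ i, CarryOp k c i x y ∨ BorrowOp k c i x y) a b ∧
      IsSR k c b ∧
      ∃ N : ℕ, (∀ n, N < n → b n = 0) ∧
        v = ∑ n ∈ Finset.Icc 1 N, (b n : ℤ) • V (-(n : ℤ)) :=
  cNSR_to_cSR_general k hk c hdec hck V hV0 hVrec v a M hsupp hrep
end

section
/- In the special case c = (1, 1) (Fibonacci), every integer v ∈ Z has a unique representation v = Σ_{n≥1} a_n X_{-n} with a_n ∈ {0,1}, finitely many nonzero, and no two consecutive a_n equal to 1, where X_{-1} = 1, X_0 = 0 and X_n = X_{n-1} + X_{n-2} for all n ∈ Z (so X_{-n} = (-1)^{n+1} F_n with standard Fibonacci F_1 = F_2 = 1). -/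
/-!
Write `Y n = X (-n) = (-1) ^ (n + 1) * F n`; consecutive terms have opposite signs. The sums of
nonconsecutive subsets of `{1, …, N}` biject onto an interval `I N`: such a set either avoids `N`,
and its sums fill `I (N - 1)`, or contains `N` and otherwise lies in `{1, …, N - 2}`, and its sums
fill `Y N + I (N - 2)`. These two intervals are disjoint and adjacent, with union `I N`, and the
intervals `I N` exhaust `ℤ`.
-/

open Set

theorem Set.BijOn.union_of_disjoint {α β : Type*} {f : α → β} {s₁ s₂ : Set α} {t₁ t₂ : Set β}
    (h₁ : BijOn f s₁ t₁) (h₂ : BijOn f s₂ t₂) (h : Disjoint t₁ t₂) :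
    BijOn f (s₁ ∪ s₂) (t₁ ∪ t₂) := by
  refine h₁.union h₂ ?_
  rintro x (hx | hx) y (hy | hy) hxy
  · exact h₁.injOn hx hy hxy
  · exact absurd hxy (h.ne_of_mem (h₁.mapsTo hx) (h₂.mapsTo hy))
  · exact absurd hxy.symm (h.ne_of_mem (h₁.mapsTo hy) (h₂.mapsTo hx))
  · exact h₂.injOn hx hy hxy

theorem bijOn_sum_insert_image {α M : Type*} [DecidableEq α] [AddCancelCommMonoid M]
    {f : α → M} {s : Set (Finset α)} {t : Set M} {a : α}
    (h : BijOn (fun S => ∑ x ∈ S, f x) s t) (ha : ∀ S ∈ s, a ∉ S) :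
    BijOn (fun S => ∑ x ∈ S, f x) (insert a '' s) ((f a + ·) '' t) := by
  have hinj : InjOn (insert a) s := fun S hS T hT hST => by
    rw [← Finset.erase_insert (ha S hS), hST, Finset.erase_insert (ha T hT)]
  rw [← bijOn_comp_iff hinj]
  refine ((add_right_injective (f a)).injOn.bijOn_image.comp h).congr fun S hS => ?_
  simp [Finset.sum_insert (ha S hS)]

def negaFib (n : ℕ) : ℤ := (-1) ^ (n + 1) * Nat.fib n

lemma negaFib_add_two (n : ℕ) : negaFib (n + 2) = negaFib n - negaFib (n + 1) := by
  simp only [negaFib, Nat.fib_add_two, Nat.cast_add]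
  ring

lemma eq_negaFib_of_rec (X : ℤ → ℤ) (hX0 : X 0 = 0) (hX1 : X (-1) = 1)
    (hXrec : ∀ n : ℤ, X n = X (n - 1) + X (n - 2)) (n : ℕ) : X (-n) = negaFib n := by
  induction n using Nat.twoStepInduction with
  | zero => simpa [negaFib] using hX0
  | one => simpa [negaFib] using hX1
  | more n ih₀ ih₁ =>
    have h := hXrec (-n)
    rw [show -(n : ℤ) - 1 = -↑(n + 1) by push_cast; ring,
      show -(n : ℤ) - 2 = -↑(n + 2) by push_cast; ring, ih₀, ih₁] at h
    rw [negaFib_add_two]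
    linarith

lemma negaFib_of_even {n : ℕ} (hn : Even n) : negaFib n = -Nat.fib n := by
  simp [negaFib, pow_succ, hn.neg_one_pow]

lemma negaFib_of_odd {n : ℕ} (hn : Odd n) : negaFib n = Nat.fib n := by
  simp [negaFib, pow_succ, hn.neg_one_pow]

lemma negaFib_signs (n : ℕ) :
    (negaFib n ≤ 0 ∧ 0 < negaFib (n + 1)) ∨ (0 < negaFib n ∧ negaFib (n + 1) < 0) := by
  have hpos : 0 < Nat.fib (n + 1) := Nat.fib_pos.2 (by omega)
  rcases n.even_or_odd with hn | hn
  · left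
    rw [negaFib_of_even hn, negaFib_of_odd hn.add_one]
    omega
  · right
    have : 0 < Nat.fib n := Nat.fib_pos.2 hn.pos
    rw [negaFib_of_odd hn, negaFib_of_even hn.add_one]
    omega

lemma natAbs_negaFib (n : ℕ) : (negaFib n).natAbs = Nat.fib n := by
  simp [negaFib, Int.natAbs_mul]

def zeckendorfSets (N : ℕ) : Set (Finset ℕ) :=
  {S | S ⊆ Finset.Icc 1 N ∧ ∀ n ∈ S, n + 1 ∉ S}

-- For `n = 0` the truncated `n - 1 = 0` still gives the right answer `{∅, {1}}`.
lemma zeckendorfSets_succ (n : ℕ) :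
    zeckendorfSets (n + 1) = zeckendorfSets n ∪ insert (n + 1) '' zeckendorfSets (n - 1) := by
  ext S
  simp only [zeckendorfSets, Set.mem_union, Set.mem_image, Set.mem_ofPred_eq, Finset.subset_iff,
    Finset.mem_Icc]
  constructor
  · rintro ⟨hS, hS'⟩
    by_cases hn : n + 1 ∈ S
    · right
      refine ⟨S.erase (n + 1), ⟨fun m hm => ?_, fun m hm hm' => ?_⟩, Finset.insert_erase hn⟩
      · have := hS (Finset.mem_of_mem_erase hm)
        have := Finset.ne_of_mem_erase hm
        have : m ≠ n := fun h => hS' m (Finset.mem_of_mem_erase hm) (h ▸ hn)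
        omega
      · exact hS' m (Finset.mem_of_mem_erase hm) (Finset.mem_of_mem_erase hm')
    · left
      refine ⟨fun m hm => ?_, hS'⟩
      have := hS hm
      have : m ≠ n + 1 := fun h => hn (h ▸ hm)
      omega
  · rintro (⟨hS, hS'⟩ | ⟨T, ⟨hT, hT'⟩, rfl⟩)
    · exact ⟨fun m hm => by have := hS hm; omega, hS'⟩
    · refine ⟨fun m hm => ?_, fun m hm hm' => ?_⟩
      · rcases Finset.mem_insert.1 hm with rfl | hm
        · omega
        · have := hT hm; omega
      · rcases Finset.mem_insert.1 hm with rfl | hm <;> rcases Finset.mem_insert.1 hm' with h | hm'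
        · omega
        · have := hT hm'; omega
        · have := hT hm; omega
        · exact hT' m hm hm'

/-- As consecutive terms of `negaFib` have opposite signs, this is `[1 - F (N + 1), F N]` for even
`N` and `[1 - F N, F (N + 1)]` for odd `N`. -/
def negaFibRange (N : ℕ) : Set ℤ :=
  Set.Icc (1 - max (negaFib N) (negaFib (N + 1))) (-min (negaFib N) (negaFib (N + 1)))

lemma negaFibRange_succ (n : ℕ) :
    negaFibRange (n + 1) = negaFibRange n ∪ (negaFib (n + 1) + ·) '' negaFibRange (n - 1) ∧
      Disjoint (negaFibRange n) ((negaFib (n + 1) + ·) '' negaFibRange (n - 1)) := by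
  simp only [negaFibRange, Set.image_const_add_Icc]
  rw [Set.disjoint_iff_forall_ne]
  rcases n with _ | m
  · norm_num [negaFib, Set.ext_iff]
    omega
  · have h₁ := negaFib_add_two m
    have h₂ := negaFib_add_two (m + 1)
    have hs := negaFib_signs m
    simp only [Nat.add_sub_cancel, add_assoc, Nat.reduceAdd] at h₁ h₂ ⊢
    refine ⟨?_, ?_⟩
    · ext v
      simp only [Set.mem_union, Set.mem_Icc]
      omega
    · simp only [Set.mem_Icc]
      omega

theorem bijOn_sum_negaFib_zeckendorfSets (N : ℕ) :
    BijOn (fun S => ∑ n ∈ S, negaFib n) (zeckendorfSets N) (negaFibRange N) := by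
  induction N using Nat.strong_induction_on with
  | _ N ih =>
  rcases N with _ | n
  · have hS : zeckendorfSets 0 = {∅} := by ext S; simp +contextual [zeckendorfSets]
    have hI : negaFibRange 0 = {0} := by norm_num [negaFibRange, negaFib]
    simp [hS, hI, bijOn_singleton]
  · rw [zeckendorfSets_succ, (negaFibRange_succ n).1]
    refine (ih n n.lt_add_one).union_of_disjoint ?_ (negaFibRange_succ n).2
    refine bijOn_sum_insert_image (ih (n - 1) (by omega)) fun S hS hn => ?_
    have := Finset.mem_Icc.1 (hS.1 hn)
    omega

lemma exists_mem_negaFibRange (v : ℤ) : ∃ N, v ∈ negaFibRange N := by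
  set N := v.natAbs + 5
  have hN : (N : ℤ) ≤ Nat.fib N := by exact_mod_cast Nat.le_fib_self (by omega)
  have hmono : (Nat.fib N : ℤ) ≤ Nat.fib (N + 1) := by exact_mod_cast Nat.fib_le_fib_succ
  have h₀ := natAbs_negaFib N
  have h₁ := natAbs_negaFib (N + 1)
  have hs := negaFib_signs N
  refine ⟨N, ?_, ?_⟩ <;> omega

theorem bijOn_sum_negaFib :
    BijOn (fun S => ∑ n ∈ S, negaFib n) {S | (∀ n ∈ S, 1 ≤ n) ∧ ∀ n ∈ S, n + 1 ∉ S} univ := by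
  refine ⟨mapsTo_univ _ _, fun S hS T hT hST => ?_, fun v _ => ?_⟩
  · set N := max (S.sup id) (T.sup id)
    have mem {U : Finset ℕ} (hU : (∀ n ∈ U, 1 ≤ n) ∧ ∀ n ∈ U, n + 1 ∉ U) (hUN : U.sup id ≤ N) :
        U ∈ zeckendorfSets N :=
      ⟨fun n hn => Finset.mem_Icc.2 ⟨hU.1 n hn, (Finset.le_sup (f := id) hn).trans hUN⟩, hU.2⟩
    exact (bijOn_sum_negaFib_zeckendorfSets N).injOn (mem hS (le_max_left _ _))
      (mem hT (le_max_right _ _)) hST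
  · obtain ⟨N, hN⟩ := exists_mem_negaFibRange v
    obtain ⟨S, hS, rfl⟩ := (bijOn_sum_negaFib_zeckendorfSets N).surjOn hN
    exact ⟨S, ⟨fun n hn => (Finset.mem_Icc.1 (hS.1 hn)).1, hS.2⟩, rfl⟩

/-- Every integer has a unique representation as a sum of distinct nonconsecutive
terms X_{-n} (n ≥ 1), where X_0 = 0, X_{-1} = 1 and X_n = X_{n-1} + X_{n-2} for all
n ∈ ℤ (so X_{-n} = (-1)^{n+1} F_n). -/
theorem zeckendorf_integers
    (X : ℤ → ℤ) (hX0 : X 0 = 0) (hX1 : X (-1) = 1)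
    (hXrec : ∀ n : ℤ, X n = X (n - 1) + X (n - 2)) :
    ∀ v : ℤ,
      ∃! S : Finset ℕ, (∀ n ∈ S, 1 ≤ n) ∧ (∀ n ∈ S, n + 1 ∉ S) ∧
        v = ∑ n ∈ S, X (-(n : ℤ)) := by
  intro v
  simp only [eq_negaFib_of_rec X hX0 hX1 hXrec]
  obtain ⟨S, hS, rfl⟩ := bijOn_sum_negaFib.surjOn (mem_univ v)
  exact ⟨S, ⟨hS.1, hS.2, rfl⟩, fun T hT => bijOn_sum_negaFib.injOn ⟨hT.1, hT.2.1⟩ hS hT.2.2.symm⟩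
end

section
/- Let c be weakly decreasing with c_k = 1 and define D_n = { v ∈ Z^{k-1} : v = Σ_{i=1}^n a_i X_{-i} for some c-satisfying representation (a_i)_{i=1}^n }. Then the cardinality of D_n equals X_{n+1}, the (n+1)-st term of the associated scalar PLRS. -/
open Finset

theorem exists_mem_Ico_succ {α : Type*} [LinearOrder α] {f : ℕ → α} {x : α} {m M : ℕ}
    (hmM : m ≤ M) (hm : f m ≤ x) (hM : x < f M) :
    ∃ s, m ≤ s ∧ s < M ∧ f s ≤ x ∧ x < f (s + 1) := by
  induction M, hmM using Nat.le_induction with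
  | base => exact absurd hM hm.not_gt
  | succ M hmM ih =>
    rcases lt_or_ge x (f M) with h | h
    · obtain ⟨s, hms, hsM, hs⟩ := ih h
      exact ⟨s, hms, hsM.trans (Nat.lt_succ_self M), hs⟩
    · exact ⟨M, hmM, Nat.lt_succ_self M, h, hM⟩

theorem MonotoneOn.eq_of_mem_Ico_succ {α : Type*} [Preorder α] {f : ℕ → α} {x : α}
    {M s t : ℕ} (hf : MonotoneOn f (Set.Iic M)) (hs : s < M) (ht : t < M)
    (hxs : x ∈ Set.Ico (f s) (f (s + 1))) (hxt : x ∈ Set.Ico (f t) (f (t + 1))) : s = t := by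
  have not_lt_of_mem : ∀ {s t}, t < M → x ∈ Set.Ico (f s) (f (s + 1)) →
      x ∈ Set.Ico (f t) (f (t + 1)) → ¬s < t := fun ht hxs hxt hst =>
    (hxs.2.trans_le (hf (by simp; omega) (by simp; omega) hst)).not_ge hxt.1
  exact le_antisymm (Nat.le_of_not_lt (not_lt_of_mem hs hxt hxs))
    (Nat.le_of_not_lt (not_lt_of_mem ht hxs hxt))

theorem Int.eq_and_eq_of_mul_add_eq_mul_add {X d e r r' : ℤ} (hr : 0 ≤ r ∧ r < X)
    (hr' : 0 ≤ r' ∧ r' < X) (h : d * X + r = e * X + r') : d = e ∧ r = r' := by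
  have hX : 0 < X := hr.1.trans_lt hr.2
  obtain ⟨hd, hr⟩ := (Int.ediv_emod_unique (a := d * X + r) (q := d) hX).2 ⟨by ring, hr⟩
  obtain ⟨he, hr'⟩ := (Int.ediv_emod_unique (a := d * X + r) (q := e) hX).2 ⟨by rw [h]; ring, hr'⟩
  exact ⟨hd.symm.trans he, hr.symm.trans hr'⟩

theorem eq_sub_sum_Ico_of_eq_sum_Icc {M : Type*} [AddCommGroup M] {k j : ℕ} {c : ℕ → ℤ}
    (hk : 1 ≤ k) (hck : c k = 1) {x : ℕ → M} (h : x j = ∑ l ∈ Icc 1 k, c l • x (j + l)) :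
    x (j + k) = x j - ∑ l ∈ Ico 1 k, c l • x (j + l) := by
  rw [← Ico_add_one_right_eq_Icc, sum_Ico_succ_top hk, hck, one_smul] at h
  rw [h]
  abel

theorem AddMonoidHom.eq_of_recurrence {G H : Type*} [AddCommGroup G] [AddCommGroup H]
    (φ : G →+ H) {k n : ℕ} (hk : 1 ≤ k) (c : ℕ → ℤ) {w : ℕ → G} {u : ℕ → H}
    (hw : ∀ j, j + k ≤ n → w (j + k) = w j - ∑ l ∈ Ico 1 k, c l • w (j + l))
    (hu : ∀ j, j + k ≤ n → u (j + k) = u j - ∑ l ∈ Ico 1 k, c l • u (j + l))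
    (hinit : ∀ j, j < k → φ (w j) = u j) : ∀ j, j ≤ n → φ (w j) = u j := by
  intro j
  induction j using Nat.strong_induction_on with
  | _ j ih =>
  intro hjn
  rcases lt_or_ge j k with hjk | hjk
  · exact hinit j hjk
  obtain ⟨i, rfl⟩ : ∃ i, j = i + k := ⟨j - k, by omega⟩
  rw [hw i hjn, hu i hjn, map_sub, map_sum, ih i (by omega) (by omega)]
  congr 1
  refine sum_congr rfl fun l hl => ?_
  rw [mem_Ico] at hl
  rw [map_zsmul, ih (i + l) (by omega) (by omega)]

theorem ncard_image_eq_of_zmod {α M : Type*} {S : Set α} {m : ℕ} (f : α → M) (val : α → ℤ)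
    (Ψ : M → ZMod m) (hΨ : ∀ a ∈ S, Ψ (f a) = val a) (hval : val '' S = Set.Ico 0 (m : ℤ))
    (hinj : ∀ a ∈ S, ∀ b ∈ S, val a = val b → f a = f b) : (f '' S).ncard = m := by
  rcases Nat.eq_zero_or_pos m with rfl | hm
  · simp [Set.image_eq_empty.1 (hval.trans (Set.Ico_self 0))]
  have hval_mem : ∀ a ∈ S, val a ∈ Set.Ico 0 (m : ℤ) := fun a ha => hval ▸ ⟨a, ha, rfl⟩
  have hinjOn : Set.InjOn Ψ (f '' S) := by
    rintro _ ⟨a, ha, rfl⟩ _ ⟨b, hb, rfl⟩ h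
    rw [hΨ a ha, hΨ b hb, ZMod.intCast_eq_intCast_iff', Int.emod_eq_of_lt (hval_mem a ha).1
      (hval_mem a ha).2, Int.emod_eq_of_lt (hval_mem b hb).1 (hval_mem b hb).2] at h
    exact hinj a ha b hb h
  have hsurj : Ψ '' (f '' S) = Set.univ := by
    refine Set.eq_univ_of_forall fun z => ?_
    obtain ⟨N, rfl⟩ := ZMod.intCast_surjective z
    obtain ⟨a, ha, haN⟩ : N % m ∈ val '' S :=
      hval ▸ ⟨Int.emod_nonneg _ (by omega), Int.emod_lt_of_pos _ (by omega)⟩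
    exact ⟨f a, ⟨a, ha, rfl⟩, by rw [hΨ a ha, haN, ZMod.intCast_mod]⟩
  rw [← hinjOn.ncard_image, hsurj, Set.ncard_univ, Nat.card_zmod]

theorem pos_of_antitone_of_pos {k : ℕ} {c : ℕ → ℤ}
    (hdec : ∀ i, 1 ≤ i → i < k → c (i + 1) ≤ c i) (hck : 0 < c k) :
    ∀ i, 1 ≤ i → i ≤ k → 0 < c i := by
  suffices h : ∀ d i, 1 ≤ i → i + d = k → c k ≤ c i from
    fun i hi hik => hck.trans_le (h (k - i) i hi (by omega))
  intro d
  induction d with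
  | zero => intro i _ h; rw [← h, Nat.add_zero]
  | succ d ih =>
    intro i hi h
    exact (ih (i + 1) (by omega) (by omega)).trans (hdec i hi (by omega))

structure IsScalarPLRS (k : ℕ) (c Xs : ℕ → ℤ) : Prop where
  one : Xs 1 = 1
  init : ∀ n, 2 ≤ n → n ≤ k → Xs n = (∑ i ∈ Icc 1 (n - 1), c i * Xs (n - i)) + 1
  step : ∀ n, k < n → Xs n = ∑ i ∈ Icc 1 k, c i * Xs (n - i)

namespace IsScalarPLRS

variable {k : ℕ} {c Xs : ℕ → ℤ}

theorem pos (hX : IsScalarPLRS k c Xs) (hk : 1 ≤ k) (hc : ∀ i, 1 ≤ i → i ≤ k → 0 < c i) :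
    ∀ n, 1 ≤ n → 0 < Xs n := by
  intro n
  induction n using Nat.strong_induction_on with
  | _ n ih =>
    intro hn
    have term_nonneg : ∀ i ∈ Icc 1 (min k (n - 1)), 0 ≤ c i * Xs (n - i) := fun i hi => by
      simp only [mem_Icc] at hi
      exact mul_nonneg (hc i hi.1 (by omega)).le (ih (n - i) (by omega) (by omega)).le
    rcases Nat.lt_trichotomy n 1 with h | rfl | h
    · omega
    · simp [hX.one]
    rcases le_or_gt n k with hnk | hnk
    · rw [hX.init n h hnk]
      have := sum_nonneg (show ∀ i ∈ Icc 1 (n - 1), 0 ≤ c i * Xs (n - i) from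
        fun i hi => term_nonneg i (by rwa [min_eq_right (by omega)]))
      omega
    · rw [hX.step n hnk]
      exact sum_pos' (fun i hi => term_nonneg i (by rwa [min_eq_left (by omega)]))
        ⟨k, by simp [hk], mul_pos (hc k hk le_rfl) (ih (n - k) (by omega) (by omega))⟩

end IsScalarPLRS

namespace IsSR

variable {k : ℕ} {c : ℕ → ℤ} {a b : ℕ → ℕ}

theorem congr_pos (h : IsSR k c a) (hab : ∀ i, 1 ≤ i → a i = b i) : IsSR k c b := by
  induction h generalizing b with
  | zero a h => exact .zero b fun n hn => hab n hn ▸ h n hn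
  | cprefix a m h1 h2 h3 h4 =>
    exact .cprefix b m h1 h2 (fun n hn hnm => hab n hn ▸ h3 n hn hnm)
      (fun n hn => hab n (by omega) ▸ h4 n hn)
  | chunk a s ℓ hs1 hs2 h1 h2 h3 h4 ih =>
    exact .chunk b s ℓ hs1 hs2 (fun n hn hns => hab n hn ▸ h1 n hn hns) (hab s hs1 ▸ h2)
      (fun i hi hil => hab (s + i) (by omega) ▸ h3 i hi hil)
      (ih fun i hi => hab (s + ℓ + i) (by omega))

theorem of_zeros_append {t : ℕ → ℕ} (hk : 1 ≤ k) (hc1 : 0 < c 1) (ht : IsSR k c t) (ℓ : ℕ)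
    (hzero : ∀ i, 1 ≤ i → i ≤ ℓ → b i = 0) (hb : ∀ i, 1 ≤ i → b (ℓ + i) = t i) :
    IsSR k c b := by
  rcases Nat.eq_zero_or_pos ℓ with rfl | hℓ
  · exact ht.congr_pos fun i hi => by simpa using (hb i hi).symm
  · refine .chunk b 1 (ℓ - 1) le_rfl hk (fun n hn hn1 => by omega)
      (by simpa [hzero 1 le_rfl hℓ]) (fun i hi hiℓ => hzero (1 + i) (by omega) (by omega))
      (ht.congr_pos fun i hi => ?_)
    rw [← hb i hi]
    congr 1
    omega

theorem iff_exists_block (hk : 1 ≤ k) (hc : ∀ i, 1 ≤ i → i ≤ k → 0 < c i) :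
    IsSR k c a ↔ ∃ s, 1 ≤ s ∧ s ≤ k ∧ (∀ i, 1 ≤ i → i < s → (a i : ℤ) = c i) ∧
      (a s : ℤ) < c s ∧ IsSR k c (fun x => a (s + x)) := by
  constructor
  · intro h
    induction h with
    | zero a h =>
      refine ⟨1, le_rfl, hk, fun i hi hi1 => by omega, ?_,
        .zero _ fun n hn => h (1 + n) (by omega)⟩
      simpa [h 1 le_rfl] using hc 1 le_rfl hk
    | cprefix a m h1 h2 h3 h4 =>
      refine ⟨m + 1, by omega, by omega, fun i hi him => h3 i hi (by omega), ?_,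
        .zero _ fun n hn => h4 (m + 1 + n) (by omega)⟩
      simpa [h4 (m + 1) (by omega)] using hc (m + 1) (by omega) (by omega)
    | chunk a s ℓ hs1 hs2 h1 h2 h3 h4 =>
      exact ⟨s, hs1, hs2, h1, h2, of_zeros_append hk (hc 1 le_rfl hk) h4 ℓ h3
        fun i _ => by rw [Nat.add_assoc]⟩
  · rintro ⟨s, hs1, hsk, hpre, hlt, htail⟩
    exact .chunk a s 0 hs1 hsk hpre hlt (fun i hi hi0 => by omega) htail

end IsSR

def repValue (Xs : ℕ → ℤ) (n : ℕ) (a : ℕ → ℕ) : ℤ :=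
  ∑ i ∈ Icc 1 n, (a i : ℤ) * Xs (n + 1 - i)

def prefixValue (c Xs : ℕ → ℤ) (n s : ℕ) : ℤ :=
  ∑ i ∈ Ico 1 s, c i * Xs (n + 1 - i)

section Values

variable {k n s : ℕ} {c Xs : ℕ → ℤ} {a b : ℕ → ℕ}

theorem repValue_congr (h : ∀ i, 1 ≤ i → a i = b i) : repValue Xs n a = repValue Xs n b :=
  sum_congr rfl fun i hi => by rw [h i (mem_Icc.1 hi).1]

theorem repValue_nonneg (hX : ∀ m, 1 ≤ m → 0 ≤ Xs m) : 0 ≤ repValue Xs n a :=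
  sum_nonneg fun i hi => mul_nonneg (Nat.cast_nonneg _) (hX _ (by simp at hi; omega))

theorem repValue_eq_prefixValue_add (hs : 1 ≤ s) (hsn : s ≤ n)
    (hpre : ∀ i, 1 ≤ i → i < s → (a i : ℤ) = c i) :
    repValue Xs n a = prefixValue c Xs n s + a s * Xs (n + 1 - s)
      + repValue Xs (n - s) (fun x => a (s + x)) := by
  have htail : repValue Xs (n - s) (fun x => a (s + x))
      = ∑ i ∈ Ico (s + 1) (n + 1), (a i : ℤ) * Xs (n + 1 - i) := by
    have := sum_Ico_add (fun i => (a i : ℤ) * Xs (n + 1 - i)) 1 (n - s + 1) s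
    rw [show n - s + 1 + s = n + 1 by omega, add_comm 1 s] at this
    rw [repValue, ← Ico_add_one_right_eq_Icc, ← this]
    refine sum_congr rfl fun i hi => ?_
    rw [mem_Ico] at hi
    rw [show n - s + 1 - i = n + 1 - (s + i) by omega]
  rw [htail, repValue, prefixValue, ← Ico_add_one_right_eq_Icc,
    ← sum_Ico_consecutive _ hs (by omega : s ≤ n + 1),
    sum_eq_sum_Ico_succ_bot (show s < n + 1 by omega), ← add_assoc]
  congr 2
  exact sum_congr rfl fun i hi => by rw [hpre i (mem_Ico.1 hi).1 (mem_Ico.1 hi).2]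

theorem repValue_eq_prefixValue_of_prefix (hpre : ∀ i, 1 ≤ i → i ≤ n → (a i : ℤ) = c i) :
    repValue Xs n a = prefixValue c Xs n (n + 1) := by
  rw [repValue, prefixValue, Ico_add_one_right_eq_Icc]
  exact sum_congr rfl fun i hi => by rw [hpre i (mem_Icc.1 hi).1 (mem_Icc.1 hi).2]

theorem prefixValue_succ (hs : 1 ≤ s) :
    prefixValue c Xs n (s + 1) = prefixValue c Xs n s + c s * Xs (n + 1 - s) :=
  sum_Ico_succ_top hs _

theorem prefixValue_monotoneOn (hc : ∀ i, 1 ≤ i → i ≤ k → 0 < c i)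
    (hX : ∀ m, 1 ≤ m → 0 < Xs m) :
    MonotoneOn (prefixValue c Xs n) (Set.Iic (min k n + 1)) := by
  intro s _ t ht hst
  refine sum_le_sum_of_subset_of_nonneg (Ico_subset_Ico le_rfl hst) fun i hi _ => ?_
  simp only [mem_Ico, Set.mem_Iic] at hi ht
  exact mul_nonneg (hc i hi.1 (by omega)).le (hX _ (by omega)).le

theorem IsScalarPLRS.prefixValue_top (hX : IsScalarPLRS k c Xs) :
    prefixValue c Xs n (min k n + 1) = Xs (n + 1) - if n < k then 1 else 0 := by
  rw [prefixValue, Ico_add_one_right_eq_Icc]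
  split_ifs with hnk
  · rw [min_eq_right hnk.le]
    rcases Nat.eq_zero_or_pos n with rfl | hn
    · simp [hX.one]
    · simp [hX.init (n + 1) (by omega) (by omega)]
  · rw [min_eq_left (by omega), hX.step (n + 1) (by omega), sub_zero]

end Values

theorem repValue_mem_Ico_of_block {n s : ℕ} {c Xs : ℕ → ℤ} {a : ℕ → ℕ}
    (hX : ∀ m, 1 ≤ m → 0 < Xs m) (hs : 1 ≤ s) (hsn : s ≤ n)
    (hpre : ∀ i, 1 ≤ i → i < s → (a i : ℤ) = c i) (hlt : (a s : ℤ) < c s)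
    (htail : repValue Xs (n - s) (fun x => a (s + x)) < Xs (n + 1 - s)) :
    repValue Xs n a ∈ Set.Ico (prefixValue c Xs n s) (prefixValue c Xs n (s + 1)) := by
  have hXs := hX (n + 1 - s) (by omega)
  have htail_nonneg :=
    repValue_nonneg (n := n - s) (a := fun x => a (s + x)) fun m hm => (hX m hm).le
  have hdigit : ((a s : ℤ) + 1) * Xs (n + 1 - s) ≤ c s * Xs (n + 1 - s) :=
    mul_le_mul_of_nonneg_right (by omega) hXs.le
  rw [repValue_eq_prefixValue_add hs hsn hpre, prefixValue_succ hs]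
  constructor <;> nlinarith

def IsSRUpTo (k : ℕ) (c : ℕ → ℤ) (n : ℕ) (a : ℕ → ℕ) : Prop :=
  IsSR k c a ∧ ∀ j, n < j → a j = 0

namespace IsSRUpTo

variable {k n : ℕ} {c Xs : ℕ → ℤ} {a b : ℕ → ℕ}

theorem prefix_or_block (hk : 1 ≤ k) (hc : ∀ i, 1 ≤ i → i ≤ k → 0 < c i)
    (ha : IsSRUpTo k c n a) :
    (n < k ∧ ∀ i, 1 ≤ i → i ≤ n → (a i : ℤ) = c i) ∨
      ∃ s, 1 ≤ s ∧ s ≤ min k n ∧ (∀ i, 1 ≤ i → i < s → (a i : ℤ) = c i) ∧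
        (a s : ℤ) < c s ∧ IsSRUpTo k c (n - s) (fun x => a (s + x)) := by
  obtain ⟨s, hs1, hsk, hpre, hlt, htail⟩ := (IsSR.iff_exists_block hk hc).1 ha.1
  by_cases hsn : s ≤ n
  · exact .inr ⟨s, hs1, le_min hsk hsn, hpre, hlt, htail, fun j hj => ha.2 _ (by omega)⟩
  · -- the prefix digits `c_i` are nonzero, so the block cannot extend past the support
    have hsn1 : s = n + 1 := by
      by_contra hne
      have := hpre (n + 1) (by omega) (by omega)
      rw [ha.2 (n + 1) (by omega)] at this
      exact (hc (n + 1) (by omega) (by omega)).ne (by simpa using this)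
    exact .inl ⟨by omega, fun i hi hin => hpre i hi (by omega)⟩

theorem exists_prefix (hc : ∀ i, 1 ≤ i → i ≤ k → 0 < c i) (hnk : n < k) :
    ∃ a, IsSRUpTo k c n a ∧ ∀ i, 1 ≤ i → i ≤ n → (a i : ℤ) = c i := by
  refine ⟨fun i => if i ≤ n then (c i).toNat else 0, ⟨?_, fun j hj => if_neg (by omega)⟩,
    fun i hi hin => by simp [hin, (hc i hi (by omega)).le]⟩
  rcases Nat.eq_zero_or_pos n with rfl | hn
  · exact .zero _ fun j hj => if_neg (by omega)
  · exact .cprefix _ n hn hnk (fun i hi hin => by simp [hin, (hc i hi (by omega)).le])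
      fun j hj => if_neg (by omega)

theorem exists_block_cons (hk : 1 ≤ k) (hc : ∀ i, 1 ≤ i → i ≤ k → 0 < c i) {s d : ℕ}
    (hs : 1 ≤ s) (hsk : s ≤ k) (hsn : s ≤ n) (hd : (d : ℤ) < c s) {t : ℕ → ℕ}
    (ht : IsSRUpTo k c (n - s) t) :
    ∃ a, IsSRUpTo k c n a ∧
      repValue Xs n a = prefixValue c Xs n s + d * Xs (n + 1 - s) + repValue Xs (n - s) t := by
  set a : ℕ → ℕ := fun i => if i < s then (c i).toNat else if i = s then d else t (i - s)
  have hpre : ∀ i, 1 ≤ i → i < s → (a i : ℤ) = c i := fun i hi his => by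
    simp [a, his, (hc i hi (by omega)).le]
  have has : a s = d := by simp [a]
  have htail : ∀ i, 1 ≤ i → a (s + i) = t i := fun i hi => by
    simp [a, show ¬s + i < s by omega, show i ≠ 0 by omega]
  refine ⟨a, ⟨(IsSR.iff_exists_block hk hc).2 ⟨s, hs, hsk, hpre, by rwa [has],
    ht.1.congr_pos fun i hi => (htail i hi).symm⟩, fun j hj => ?_⟩, ?_⟩
  · simpa [a, show ¬j < s by omega, show j ≠ s by omega] using ht.2 (j - s) (by omega)
  · rw [repValue_eq_prefixValue_add hs hsn hpre, has, repValue_congr htail]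

theorem repValue_lt (hk : 1 ≤ k) (hc : ∀ i, 1 ≤ i → i ≤ k → 0 < c i)
    (hX : IsScalarPLRS k c Xs) (ha : IsSRUpTo k c n a) :
    repValue Xs n a < Xs (n + 1) := by
  induction n using Nat.strong_induction_on generalizing a with
  | _ n ih =>
  have htop := hX.prefixValue_top (n := n)
  rcases ha.prefix_or_block hk hc with ⟨hnk, hpre⟩ | ⟨s, hs, hsn, hpre, hlt, htail⟩
  · rw [repValue_eq_prefixValue_of_prefix hpre]
    rw [min_eq_right hnk.le, if_pos hnk] at htop
    omega
  · have hI := repValue_mem_Ico_of_block (n := n) (hX.pos hk hc) hs (by omega) hpre hlt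
      (by simpa [show n - s + 1 = n + 1 - s by omega] using ih (n - s) (by omega) htail)
    have hmono := prefixValue_monotoneOn hc (hX.pos hk hc) (n := n)
      (show s + 1 ∈ Set.Iic (min k n + 1) by simp; omega) (b := min k n + 1) (by simp) (by omega)
    split_ifs at htop <;> linarith [hI.2]

theorem repValue_mem_Ico (hk : 1 ≤ k) (hc : ∀ i, 1 ≤ i → i ≤ k → 0 < c i)
    (hX : IsScalarPLRS k c Xs) {s : ℕ} (hs : 1 ≤ s) (hsn : s ≤ n)
    (hpre : ∀ i, 1 ≤ i → i < s → (a i : ℤ) = c i) (hlt : (a s : ℤ) < c s)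
    (htail : IsSRUpTo k c (n - s) (fun x => a (s + x))) :
    repValue Xs n a ∈ Set.Ico (prefixValue c Xs n s) (prefixValue c Xs n (s + 1)) :=
  repValue_mem_Ico_of_block (hX.pos hk hc) hs hsn hpre hlt
    (by simpa [show n - s + 1 = n + 1 - s by omega] using htail.repValue_lt hk hc hX)

theorem eq_of_repValue_eq (hk : 1 ≤ k) (hc : ∀ i, 1 ≤ i → i ≤ k → 0 < c i)
    (hX : IsScalarPLRS k c Xs) (ha : IsSRUpTo k c n a) (hb : IsSRUpTo k c n b)
    (hab : repValue Xs n a = repValue Xs n b) :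
    ∀ i, 1 ≤ i → a i = b i := by
  induction n using Nat.strong_induction_on generalizing a b with
  | _ n ih =>
  have hmono := prefixValue_monotoneOn hc (hX.pos hk hc) (n := n)
  have prefix_ne_block : ∀ {x y : ℕ → ℕ}, (∀ i, 1 ≤ i → i ≤ n → (x i : ℤ) = c i) → n < k →
      IsSRUpTo k c n y → ∀ s, 1 ≤ s → s ≤ n → (∀ i, 1 ≤ i → i < s → (y i : ℤ) = c i) →
      (y s : ℤ) < c s → IsSRUpTo k c (n - s) (fun x => y (s + x)) →
      repValue Xs n x ≠ repValue Xs n y := by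
    intro x y hx hnk _ s hs hsn hpre hlt htail
    have hI := repValue_mem_Ico hk hc hX hs hsn hpre hlt htail
    have := hmono (show s + 1 ∈ Set.Iic (min k n + 1) by simp; omega) (b := n + 1)
      (by simp; omega) (by omega)
    rw [repValue_eq_prefixValue_of_prefix hx]
    exact (hI.2.trans_le this).ne'
  rcases ha.prefix_or_block hk hc with ⟨hnk, hpa⟩ | ⟨s, hs, hsn, hpa, hlta, hta⟩ <;>
    rcases hb.prefix_or_block hk hc with ⟨hnk', hpb⟩ | ⟨t, ht, htn, hpb, hltb, htb⟩
  · intro i hi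
    by_cases hin : i ≤ n
    · exact_mod_cast (hpa i hi hin).trans (hpb i hi hin).symm
    · rw [ha.2 i (by omega), hb.2 i (by omega)]
  · exact absurd hab (prefix_ne_block hpa hnk hb t ht (by omega) hpb hltb htb)
  · exact absurd hab.symm (prefix_ne_block hpb hnk' ha s hs (by omega) hpa hlta hta)
  · have hIa := repValue_mem_Ico (n := n) hk hc hX hs (by omega) hpa hlta hta
    have hIb := repValue_mem_Ico (n := n) hk hc hX ht (by omega) hpb hltb htb
    obtain rfl : s = t := hmono.eq_of_mem_Ico_succ (by omega) (by omega) hIa (hab ▸ hIb)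
    rw [repValue_eq_prefixValue_add hs (by omega) hpa,
      repValue_eq_prefixValue_add hs (by omega) hpb, add_assoc, add_assoc] at hab
    have hbound := fun {x : ℕ → ℕ} (hx : IsSRUpTo k c (n - s) x) =>
      And.intro (repValue_nonneg (n := n - s) (a := x) fun m hm => (hX.pos hk hc m hm).le)
        (by simpa [show n - s + 1 = n + 1 - s by omega] using hx.repValue_lt hk hc hX)
    obtain ⟨hdigit, htail⟩ := Int.eq_and_eq_of_mul_add_eq_mul_add (hbound hta) (hbound htb)
      (add_left_cancel hab)
    intro i hi
    rcases lt_trichotomy i s with his | rfl | his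
    · exact_mod_cast (hpa i hi his).trans (hpb i hi his).symm
    · exact_mod_cast hdigit
    · simpa [Nat.add_sub_cancel' his.le] using
        ih (n - s) (by omega) hta htb htail (i - s) (by omega)

theorem exists_repValue_eq (hk : 1 ≤ k) (hc : ∀ i, 1 ≤ i → i ≤ k → 0 < c i)
    (hX : IsScalarPLRS k c Xs) (n : ℕ) {N : ℤ} (hN0 : 0 ≤ N) (hN : N < Xs (n + 1)) :
    ∃ a, IsSRUpTo k c n a ∧ repValue Xs n a = N := by
  induction n using Nat.strong_induction_on generalizing N with
  | _ n ih =>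
  have htop := hX.prefixValue_top (n := n)
  by_cases hmax : n < k ∧ N = Xs (n + 1) - 1
  · obtain ⟨a, ha, hpre⟩ := exists_prefix hc hmax.1
    refine ⟨a, ha, ?_⟩
    rw [min_eq_right hmax.1.le, if_pos hmax.1] at htop
    rw [repValue_eq_prefixValue_of_prefix hpre, htop, hmax.2]
  have hNtop : N < prefixValue c Xs n (min k n + 1) := by
    rw [htop]
    split_ifs with hnk
    · exact lt_of_le_of_ne (by omega) fun h => hmax ⟨hnk, by omega⟩
    · simpa using hN
  -- choose the block `s` greedily, then the digit and the tail by division with remainder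
  obtain ⟨s, hs, hsn, hlo, hhi⟩ := exists_mem_Ico_succ (m := 1) (by omega)
    (by simpa [prefixValue] using hN0) hNtop
  have hXs := hX.pos hk hc (n + 1 - s) (by omega)
  rw [prefixValue_succ hs] at hhi
  set q := (N - prefixValue c Xs n s) / Xs (n + 1 - s)
  have hq0 : 0 ≤ q := Int.ediv_nonneg (by omega) hXs.le
  have hqc : q < c s := (Int.ediv_lt_iff_lt_mul hXs).2 (by linarith)
  obtain ⟨t, ht, htval⟩ := ih (n - s) (by omega)
    (N := (N - prefixValue c Xs n s) % Xs (n + 1 - s)) (Int.emod_nonneg _ hXs.ne')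
    (by rw [show n - s + 1 = n + 1 - s by omega]; exact Int.emod_lt_of_pos _ hXs)
  obtain ⟨a, ha, haval⟩ := exists_block_cons (Xs := Xs) hk hc hs (by omega) (by omega)
    (d := q.toNat) (by rwa [Int.toNat_of_nonneg hq0]) ht
  refine ⟨a, ha, ?_⟩
  rw [haval, htval, Int.toNat_of_nonneg hq0, add_assoc, mul_comm, Int.mul_ediv_add_emod]
  ring

end IsSRUpTo

theorem exists_addMonoidHom_repValue {k n m : ℕ} {c Xs : ℕ → ℤ} {V : ℤ → Fin (k - 1) → ℤ}
    (hk : 1 ≤ k) (hck : c k = 1)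
    (hXrec : ∀ n, k < n → Xs n = ∑ i ∈ Icc 1 k, c i * Xs (n - i)) (hm : (m : ℤ) = Xs (n + 1))
    (hV0 : V 0 = 0)
    (hVe : ∀ i : ℕ, 1 ≤ i → i ≤ k - 1 →
      V (-(i : ℤ)) = fun j : Fin (k - 1) => if (j : ℕ) + 1 = i then 1 else 0)
    (hVrec : ∀ n : ℤ, V n = ∑ l ∈ Icc 1 k, c l • V (n - (l : ℤ))) :
    ∃ Ψ : (Fin (k - 1) → ℤ) →+ ZMod m,
      ∀ a : ℕ → ℕ, Ψ (∑ i ∈ Icc 1 n, (a i : ℤ) • V (-(i : ℤ))) = repValue Xs n a := by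
  set u : ℕ → ZMod m := fun j => (Xs (n + 1 - j) : ZMod m)
  let Ψ := (Fintype.linearCombination ℤ fun j : Fin (k - 1) => u (j + 1)).toAddMonoidHom
  have hΨ : ∀ j, j ≤ n → Ψ (V (-(j : ℤ))) = u j := by
    refine Ψ.eq_of_recurrence hk c
      (fun j _ => eq_sub_sum_Ico_of_eq_sum_Icc (x := fun j => V (-(j : ℤ))) hk hck ?_)
      (fun j hj => eq_sub_sum_Ico_of_eq_sum_Icc (x := u) hk hck ?_) fun j hj => ?_
    · rw [hVrec]
      refine sum_congr rfl fun l _ => ?_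
      push_cast
      ring_nf
    · simp only [u, hXrec (n + 1 - j) (by omega), Int.cast_sum, Int.cast_mul, zsmul_eq_mul]
      refine sum_congr rfl fun l _ => ?_
      rw [Nat.sub_sub]
    · rcases Nat.eq_zero_or_pos j with rfl | hj0
      · simp [u, hV0, ← hm]
      · have hsingle : V (-(j : ℤ)) = Pi.single (⟨j - 1, by omega⟩ : Fin (k - 1)) 1 := by
          rw [hVe j hj0 (by omega)]
          funext i
          by_cases hij : (i : ℕ) + 1 = j <;> simp [Pi.single_apply, Fin.ext_iff, hij] <;> omega
        simp [Ψ, hsingle, Fintype.linearCombination_apply_single, Nat.sub_add_cancel hj0]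
  refine ⟨Ψ, fun a => ?_⟩
  rw [map_sum, repValue]
  push_cast
  refine sum_congr rfl fun i hi => ?_
  rw [map_zsmul, hΨ i (mem_Icc.1 hi).2, zsmul_eq_mul, Int.cast_natCast]

theorem card_Dn_general
    (k : ℕ) (hk : 2 ≤ k) (c : ℕ → ℤ)
    (hdec : ∀ i, 1 ≤ i → i < k → c (i + 1) ≤ c i) (hck : c k = 1)
    (Xs : ℕ → ℤ) (hXs1 : Xs 1 = 1)
    (hXsinit : ∀ n, 2 ≤ n → n ≤ k →
      Xs n = (∑ i ∈ Finset.Icc 1 (n - 1), c i * Xs (n - i)) + 1)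
    (hXsrec : ∀ n, k < n → Xs n = ∑ i ∈ Finset.Icc 1 k, c i * Xs (n - i))
    (V : ℤ → Fin (k - 1) → ℤ)
    (hV0 : V 0 = 0)
    (hVe : ∀ i : ℕ, 1 ≤ i → i ≤ k - 1 →
      V (-(i : ℤ)) = fun j : Fin (k - 1) => if (j : ℕ) + 1 = i then 1 else 0)
    (hVrec : ∀ n : ℤ, V n = ∑ l ∈ Finset.Icc 1 k, c l • V (n - (l : ℤ))) :
    ∀ n : ℕ,
      (({v : Fin (k - 1) → ℤ | ∃ a : ℕ → ℕ, IsSR k c a ∧ (∀ j, n < j → a j = 0) ∧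
          v = ∑ i ∈ Finset.Icc 1 n, (a i : ℤ) • V (-(i : ℤ))}.ncard : ℤ))
        = Xs (n + 1) := by
  intro n
  have hk1 : 1 ≤ k := by omega
  have hc := pos_of_antitone_of_pos hdec (hck ▸ one_pos)
  have hX : IsScalarPLRS k c Xs := ⟨hXs1, hXsinit, hXsrec⟩
  obtain ⟨m, hm⟩ : ∃ m : ℕ, (m : ℤ) = Xs (n + 1) :=
    ⟨_, Int.toNat_of_nonneg (hX.pos hk1 hc _ n.succ_pos).le⟩
  obtain ⟨Ψ, hΨ⟩ := exists_addMonoidHom_repValue (n := n) hk1 hck hXsrec hm hV0 hVe hVrec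
  have hD : {v : Fin (k - 1) → ℤ | ∃ a : ℕ → ℕ, IsSR k c a ∧ (∀ j, n < j → a j = 0) ∧
      v = ∑ i ∈ Finset.Icc 1 n, (a i : ℤ) • V (-(i : ℤ))}
      = (fun a => ∑ i ∈ Icc 1 n, (a i : ℤ) • V (-(i : ℤ))) '' {a | IsSRUpTo k c n a} := by
    ext v
    simp [IsSRUpTo, and_assoc, eq_comm]
  rw [hD, ← hm, ncard_image_eq_of_zmod _ (repValue Xs n) Ψ (fun a _ => hΨ a) ?_
    fun a ha b hb hab => ?_]
  · ext N
    refine ⟨?_, fun hN => IsSRUpTo.exists_repValue_eq hk1 hc hX n hN.1 (hm ▸ hN.2)⟩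
    rintro ⟨a, ha, rfl⟩
    exact ⟨repValue_nonneg fun j hj => (hX.pos hk1 hc j hj).le, hm ▸ ha.repValue_lt hk1 hc hX⟩
  · exact sum_congr rfl fun i hi =>
      by rw [IsSRUpTo.eq_of_repValue_eq hk1 hc hX ha hb hab i (mem_Icc.1 hi).1]

/-- The set D_n of vectors representable by a c-satisfying representation supported on
indices 1 through n has cardinality X^s_{n+1}, the (n+1)-st term of the scalar PLRS. -/
theorem card_Dn
    (k : ℕ) (hk : 2 ≤ k) (c : ℕ → ℤ)
    (hc1 : 0 < c 1)
    (hdec : ∀ i, 1 ≤ i → i < k → c (i + 1) ≤ c i) (hck : c k = 1)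
    (Xs : ℕ → ℤ) (hXs1 : Xs 1 = 1)
    (hXsinit : ∀ n, 2 ≤ n → n ≤ k →
      Xs n = (∑ i ∈ Finset.Icc 1 (n - 1), c i * Xs (n - i)) + 1)
    (hXsrec : ∀ n, k < n → Xs n = ∑ i ∈ Finset.Icc 1 k, c i * Xs (n - i))
    (V : ℤ → Fin (k - 1) → ℤ)
    (hV0 : V 0 = 0)
    (hVe : ∀ i : ℕ, 1 ≤ i → i ≤ k - 1 →
      V (-(i : ℤ)) = fun j : Fin (k - 1) => if (j : ℕ) + 1 = i then 1 else 0)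
    (hVrec : ∀ n : ℤ, V n = ∑ l ∈ Finset.Icc 1 k, c l • V (n - (l : ℤ))) :
    ∀ n : ℕ,
      (({v : Fin (k - 1) → ℤ | ∃ a : ℕ → ℕ, IsSR k c a ∧ (∀ j, n < j → a j = 0) ∧
          v = ∑ i ∈ Finset.Icc 1 n, (a i : ℤ) • V (-(i : ℤ))}.ncard : ℤ))
        = Xs (n + 1) :=
  card_Dn_general k hk c hdec hck Xs hXs1 hXsinit hXsrec V hV0 hVe hVrec
end
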